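/- arXiv:2301.13079 — 9 statements merged into one kernel-verified Lean document; each statement's English description precedes it below -/
import Mathlib

section
/- The correlation metric satisfies the triangle inequality: for all (distinct) vertices u, v, w in V, d_uv + d_vw ≥ d_uw. -/
open Finset

/-- Positive neighborhood of `u`. -/
def Np {V : Type*} [Fintype V] (pos : V → V → Bool) (u : V) : Finset V :=
  Finset.univ.filter (fun v => pos u v)

/-- Negative neighborhood of `u`. -/
def Nm {V : Type*} [Fintype V] (pos : V → V → Bool) (u : V) : Finset V :=
  Finset.univ.filter (fun v => ¬ pos u v)

/-- The correlation metric. -/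
noncomputable def corrDist {V : Type*} [Fintype V] [DecidableEq V]
    (pos : V → V → Bool) (u v : V) : ℝ :=
  1 - ((Np pos u ∩ Np pos v).card : ℝ) /
      ((Fintype.card V : ℝ) - ((Nm pos u ∩ Nm pos v).card : ℝ))

/-- Number of disagreements incident to `u` under the clustering `C`. -/
def yC {V : Type*} [Fintype V] [DecidableEq V] (pos : V → V → Bool) (C : V → ℕ) (u : V) : ℕ :=
  (Finset.univ.filter (fun v => v ≠ u ∧
    ((pos u v ∧ C u ≠ C v) ∨ (¬ (pos u v) ∧ C u = C v)))).card

/-- Optimal value of the Min Max correlation clustering objective. -/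
noncomputable def OPT {V : Type*} [Fintype V] [DecidableEq V] (pos : V → V → Bool) : ℕ :=
  sInf { k : ℕ | ∃ C : V → ℕ, k = Finset.univ.sup (yC pos C) }

/-- `d̂`. -/
noncomputable def dhat {V : Type*} [Fintype V] [DecidableEq V]
    (pos : V → V → Bool) (u v : V) : ℝ :=
  if pos u v then corrDist pos u v else 1 - corrDist pos u v

/-- number of samples. -/
noncomputable def mSample (V : Type*) [Fintype V] (ε : ℝ) : ℕ :=
  ⌈(32 / ε ^ 2) * Real.log (Fintype.card V)⌉₊

/-- Sample space: one subset of `N_u^+` of size `min m |N_u^+|` per vertex `u`. -/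
abbrev SampleSpace {V : Type*} [Fintype V] [DecidableEq V]
    (pos : V → V → Bool) (m : ℕ) : Type _ :=
  ∀ u : V, {s : Finset V // s ⊆ Np pos u ∧ s.card = min m (Np pos u).card}

/-- Uniform probability of an event over a finite sample space. -/
noncomputable def prob {Ω : Type*} [Fintype Ω] (E : Set Ω) : ℝ :=
  (E.ncard : ℝ) / (Fintype.card Ω : ℝ)

noncomputable def West {V : Type*} [Fintype V] [DecidableEq V]
    (pos : V → V → Bool) {m : ℕ} (ω : SampleSpace pos m) (u v : V) : ℝ :=
  if m ≤ (Np pos u).card then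
    ((Np pos u).card : ℝ) / m * (((ω u).1 ∩ Np pos v).card : ℝ)
  else ((Np pos u ∩ Np pos v).card : ℝ)

noncomputable def Yest {V : Type*} [Fintype V] [DecidableEq V]
    (pos : V → V → Bool) {m : ℕ} (ω : SampleSpace pos m) (u v : V) : ℝ :=
  if m ≤ (Np pos u).card then
    ((Np pos u).card : ℝ) / m * (((ω u).1 ∩ Nm pos v).card : ℝ)
  else ((Np pos u ∩ Nm pos v).card : ℝ)

/-- Initial estimate of the correlation metric for a pair labeled with `|N_v^+| ≥ |N_u^+|`. -/
noncomputable def dbar {V : Type*} [Fintype V] [DecidableEq V]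
    (pos : V → V → Bool) {m : ℕ} (ω : SampleSpace pos m) (u v : V) : ℝ :=
  (Yest pos ω u v + Yest pos ω v u) / (((Np pos u).card : ℝ) + Yest pos ω v u)

/-- Initial estimate, with the pair relabeled so the vertex with larger
positive neighborhood comes second. -/
noncomputable def dbarS {V : Type*} [Fintype V] [DecidableEq V]
    (pos : V → V → Bool) {m : ℕ} (ω : SampleSpace pos m) (u v : V) : ℝ :=
  if (Np pos u).card ≤ (Np pos v).card then dbar pos ω u v else dbar pos ω v u

noncomputable def cc1 (ε : ℝ) : ℝ := (1 + ε) / (1 - ε)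
noncomputable def hh1 (ε : ℝ) : ℝ := 2 * ε / (1 - ε)
noncomputable def cc2 (ε : ℝ) : ℝ := (1 + ε) / (1 - ε)
noncomputable def hh2 (ε : ℝ) : ℝ := 2 * ε / (1 - ε)
noncomputable def cc3 (ε : ℝ) : ℝ := ((1 + ε) / (1 - ε)) ^ 2
noncomputable def hh3 (ε : ℝ) : ℝ := (2 * ε / (1 - ε)) * (1 + 2 * (1 + ε) / (1 - ε))
noncomputable def cc4 (ε : ℝ) : ℝ := (2 * cc3 ε + 1) * cc3 ε
noncomputable def hh4 (ε : ℝ) : ℝ := (4 * cc3 ε + 1) * (2 * cc3 ε + 1) * hh3 ε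
noncomputable def DD (ε : ℝ) : ℝ := 2 * cc3 ε

/-- Post-processed estimate. -/
noncomputable def dtilde {V : Type*} [Fintype V] [DecidableEq V] (ε : ℝ)
    (pos : V → V → Bool) {m : ℕ} (ω : SampleSpace pos m) (u v : V) : ℝ :=
  if pos u v ∧ dbarS pos ω u v ≤ 2 * hh3 ε then 0
  else if ¬ (pos u v) ∧ 1 / (2 * cc3 ε + 1) ≤ dbarS pos ω u v then 1
  else dbarS pos ω u v

/-- The radius `r(δ₁, δ₂)` from Appendix B. -/
noncomputable def rr (δ1 δ2 : ℝ) : ℝ :=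
  (1 - δ2 - δ1 * δ2 - δ1 ^ 2 * δ2 - δ1 ^ 3 * δ2) /
    (δ1 ^ 2 + δ1 ^ 3 * (δ1 + 1) + δ1 + 1)

noncomputable def c1const (δ1 δ2 : ℝ) : ℝ := δ1 + δ2 / rr δ1 δ2
noncomputable def bconst (δ1 δ2 : ℝ) : ℝ := (c1const δ1 δ2 + 1) * δ1 + δ2 / rr δ1 δ2
noncomputable def c2const (δ1 δ2 : ℝ) : ℝ := δ1 * (bconst δ1 δ2 + 1) + δ2 / rr δ1 δ2


section CorrAux
set_option linter.unusedSectionVars false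

variable {V : Type*} [Fintype V] [DecidableEq V]

/-- symmetric difference -/
def sdAux (A C : Finset V) : Finset V := (A \ C) ∪ (C \ A)

lemma sdAux_card (A C : Finset V) : (sdAux A C).card + (A ∩ C).card = (A ∪ C).card := by
  rw [← Finset.card_union_of_disjoint]
  · congr 1; ext x; simp [sdAux]; tauto
  · simp [Finset.disjoint_left, sdAux]; tauto

lemma key_nat_aux (A B C : Finset V) :
    (sdAux A C).card + 2 * (B \ (A ∪ C)).card ≤ (sdAux A B).card + (sdAux B C).card := by
  have h1 : (sdAux A B ∪ sdAux B C).card + (sdAux A B ∩ sdAux B C).card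
      = (sdAux A B).card + (sdAux B C).card := Finset.card_union_add_card_inter _ _
  have h2 : sdAux A C ∪ (B \ (A ∪ C)) ⊆ sdAux A B ∪ sdAux B C := by
    intro x; simp [sdAux]; tauto
  have h3 : B \ (A ∪ C) ⊆ sdAux A B ∩ sdAux B C := by
    intro x; simp [sdAux]; tauto
  have h4 : Disjoint (sdAux A C) (B \ (A ∪ C)) := by
    simp [Finset.disjoint_left, sdAux]; tauto
  have := Finset.card_union_of_disjoint h4
  have h5 := Finset.card_le_card h2
  have h6 := Finset.card_le_card h3
  omega

lemma union3_aux (A B C : Finset V) :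
    (A ∪ B ∪ C).card = (A ∪ C).card + (B \ (A ∪ C)).card := by
  rw [← Finset.card_union_of_disjoint Finset.disjoint_sdiff]
  congr 1; ext x; simp; tauto

lemma jaccard_triangle_aux (A B C : Finset V) (hA : A.Nonempty) (hB : B.Nonempty)
    (hC : C.Nonempty) :
    ((sdAux A C).card : ℝ) / ((A ∪ C).card : ℝ) ≤
      ((sdAux A B).card : ℝ) / ((A ∪ B).card : ℝ) +
      ((sdAux B C).card : ℝ) / ((B ∪ C).card : ℝ) := by
  set U := A ∪ B ∪ C with hU
  have hUpos : (0:ℝ) < U.card := by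
    exact_mod_cast Finset.card_pos.2 (hA.mono (by intro x hx; simp [hU]; tauto))
  have hACpos : (0:ℝ) < (A ∪ C).card := by
    exact_mod_cast Finset.card_pos.2 (hA.mono Finset.subset_union_left)
  have hABpos : (0:ℝ) < (A ∪ B).card := by
    exact_mod_cast Finset.card_pos.2 (hA.mono Finset.subset_union_left)
  have hBCpos : (0:ℝ) < (B ∪ C).card := by
    exact_mod_cast Finset.card_pos.2 (hB.mono Finset.subset_union_left)
  have step1 : ((sdAux A C).card : ℝ) / ((A ∪ C).card : ℝ)
      ≤ (((sdAux A B).card : ℝ) + ((sdAux B C).card : ℝ)) / (U.card : ℝ) := by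
    rw [div_le_div_iff₀ hACpos hUpos]
    have hb : (U.card : ℝ) = ((A ∪ C).card : ℝ) + ((B \ (A ∪ C)).card : ℝ) := by
      exact_mod_cast union3_aux A B C
    have hkey : ((sdAux A C).card : ℝ) + 2 * ((B \ (A ∪ C)).card : ℝ)
        ≤ ((sdAux A B).card : ℝ) + ((sdAux B C).card : ℝ) := by
      exact_mod_cast key_nat_aux A B C
    have hsdle : ((sdAux A C).card : ℝ) ≤ ((A ∪ C).card : ℝ) := by
      exact_mod_cast Finset.card_le_card (by intro x; simp [sdAux]; tauto)
    nlinarith [(by positivity : (0:ℝ) ≤ ((B \ (A ∪ C)).card : ℝ))]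
  refine step1.trans ?_
  rw [add_div]
  gcongr
  · rw [hU]; exact Finset.subset_union_left
  · rw [hU, Finset.union_assoc]; exact Finset.subset_union_right

lemma mem_Np_self (pos : V → V → Bool) (hrefl : ∀ u, pos u u = true) (x : V) :
    x ∈ Np pos x := by simp [Np, hrefl x]

lemma corrDist_eq_jaccard (pos : V → V → Bool) (hrefl : ∀ u, pos u u = true) (x y : V) :
    corrDist pos x y =
      ((sdAux (Np pos x) (Np pos y)).card : ℝ) / ((Np pos x ∪ Np pos y).card : ℝ) := by
  have hcompl : Nm pos x ∩ Nm pos y = (Np pos x ∪ Np pos y)ᶜ := by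
    ext z; simp [Nm, Np]
  have hle : (Np pos x ∪ Np pos y).card ≤ Fintype.card V := Finset.card_le_univ _
  have hden : (Fintype.card V : ℝ) - ((Nm pos x ∩ Nm pos y).card : ℝ)
      = ((Np pos x ∪ Np pos y).card : ℝ) := by
    rw [hcompl, Finset.card_compl, Nat.cast_sub hle]; ring
  have hpos : (0:ℝ) < ((Np pos x ∪ Np pos y).card : ℝ) := by
    exact_mod_cast Finset.card_pos.2 ⟨x, Finset.mem_union_left _ (mem_Np_self pos hrefl x)⟩
  have hsd : ((sdAux (Np pos x) (Np pos y)).card : ℝ) + ((Np pos x ∩ Np pos y).card : ℝ)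
      = ((Np pos x ∪ Np pos y).card : ℝ) := by exact_mod_cast sdAux_card _ _
  rw [corrDist, hden]
  field_simp
  linarith

end CorrAux

/-- the correlation metric satisfies the triangle inequality. -/
theorem corr_metric_triangle_inequality
    {V : Type*} [Fintype V] [DecidableEq V] (pos : V → V → Bool)
    (hsymm : ∀ u v, pos u v = pos v u) (hrefl : ∀ u, pos u u = true)
    (u v w : V) (huv : u ≠ v) (hvw : v ≠ w) (huw : u ≠ w) :
    corrDist pos u w ≤ corrDist pos u v + corrDist pos v w := by
  rw [corrDist_eq_jaccard pos hrefl, corrDist_eq_jaccard pos hrefl,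
    corrDist_eq_jaccard pos hrefl]
  exact jaccard_triangle_aux _ _ _ ⟨u, mem_Np_self pos hrefl u⟩
    ⟨v, mem_Np_self pos hrefl v⟩ ⟨w, mem_Np_self pos hrefl w⟩
end

section
/- For any clustering C of V, any vertex u ∈ V, and any v ∈ N_u^+ with C(v) = C(u), it holds that |N_u^+ ∩ N_v^-| + |N_u^- ∩ N_v^+| ≤ y_C(u) + y_C(v). -/
open Finset

/-- Proposition (disagreements_mixed). -/
theorem disagreements_mixed
    {V : Type*} [Fintype V] [DecidableEq V] (pos : V → V → Bool)
    (hsymm : ∀ u v, pos u v = pos v u) (hrefl : ∀ u, pos u u = true)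
    (C : V → ℕ) (u v : V) (hv : v ∈ Np pos u) (hcl : C v = C u) :
    (Np pos u ∩ Nm pos v).card + (Nm pos u ∩ Np pos v).card ≤
      yC pos C u + yC pos C v := by
  classical
  have hv' : pos u v = true := by
    simpa [Np] using hv
  set A := Np pos u ∩ Nm pos v with hA
  set B := Nm pos u ∩ Np pos v with hB
  set Du := Finset.univ.filter (fun w => w ≠ u ∧
    ((pos u w ∧ C u ≠ C w) ∨ (¬ (pos u w) ∧ C u = C w))) with hDu
  set Dv := Finset.univ.filter (fun w => w ≠ v ∧
    ((pos v w ∧ C v ≠ C w) ∨ (¬ (pos v w) ∧ C v = C w))) with hDv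
  have memA : ∀ w, w ∈ A → pos u w = true ∧ ¬ (pos v w = true) := by
    intro w hw
    simp only [hA, Np, Nm, mem_inter, mem_filter, mem_univ, true_and] at hw
    exact hw
  have memB : ∀ w, w ∈ B → ¬ (pos u w = true) ∧ pos v w = true := by
    intro w hw
    simp only [hB, Np, Nm, mem_inter, mem_filter, mem_univ, true_and] at hw
    exact hw
  have h1 : A.filter (fun w => ¬ C w = C u) ∪ B.filter (fun w => C w = C u) ⊆ Du := by
    intro w hw
    simp only [mem_union, mem_filter] at hw
    simp only [hDu, mem_filter, mem_univ, true_and]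
    rcases hw with ⟨hwA, hne⟩ | ⟨hwB, heq⟩
    · obtain ⟨hpu, hnv⟩ := memA w hwA
      refine ⟨?_, Or.inl ⟨hpu, fun h => hne h.symm⟩⟩
      intro heq; apply hnv; rw [heq, hsymm]; exact hv'
    · obtain ⟨hnu, hpv⟩ := memB w hwB
      refine ⟨?_, Or.inr ⟨hnu, heq.symm⟩⟩
      intro heq; apply hnu; rw [heq]; exact hrefl u
  have h2 : A.filter (fun w => C w = C u) ∪ B.filter (fun w => ¬ C w = C u) ⊆ Dv := by
    intro w hw
    simp only [mem_union, mem_filter] at hw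
    simp only [hDv, mem_filter, mem_univ, true_and]
    rcases hw with ⟨hwA, heq⟩ | ⟨hwB, hne⟩
    · obtain ⟨hpu, hnv⟩ := memA w hwA
      refine ⟨?_, Or.inr ⟨hnv, by rw [hcl, heq]⟩⟩
      intro heq; apply hnv; rw [heq]; exact hrefl v
    · obtain ⟨hnu, hpv⟩ := memB w hwB
      refine ⟨?_, Or.inl ⟨hpv, fun h => hne (by rw [← h, hcl])⟩⟩
      intro heq; apply hnu; rw [heq]; exact hv'
  have d1 : Disjoint (A.filter (fun w => ¬ C w = C u)) (B.filter (fun w => C w = C u)) := by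
    rw [Finset.disjoint_left]
    intro w hw hw'
    simp only [mem_filter] at hw hw'
    exact hw.2 hw'.2
  have d2 : Disjoint (A.filter (fun w => C w = C u)) (B.filter (fun w => ¬ C w = C u)) := by
    rw [Finset.disjoint_left]
    intro w hw hw'
    simp only [mem_filter] at hw hw'
    exact hw'.2 hw.2
  have c1 : (A.filter (fun w => ¬ C w = C u)).card + (B.filter (fun w => C w = C u)).card
      ≤ Du.card := by
    rw [← Finset.card_union_of_disjoint d1]
    exact Finset.card_le_card h1
  have c2 : (A.filter (fun w => C w = C u)).card + (B.filter (fun w => ¬ C w = C u)).card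
      ≤ Dv.card := by
    rw [← Finset.card_union_of_disjoint d2]
    exact Finset.card_le_card h2
  have sA : (A.filter (fun w => C w = C u)).card + (A.filter (fun w => ¬ C w = C u)).card
      = A.card := Finset.card_filter_add_card_filter_not _
  have sB : (B.filter (fun w => C w = C u)).card + (B.filter (fun w => ¬ C w = C u)).card
      = B.card := Finset.card_filter_add_card_filter_not _
  have : yC pos C u = Du.card := rfl
  have : yC pos C v = Dv.card := rfl
  show A.card + B.card ≤ yC pos C u + yC pos C v
  have hu : yC pos C u = Du.card := by simp [yC, hDu]
  have hvv : yC pos C v = Dv.card := by simp [yC, hDv]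
  omega
end

section
/- For every clustering C of V and every vertex u ∈ V, the positive-side fractional cost satisfies S^+ := Σ_{v ∈ N_u^+} d_uv ≤ 3 · max_{z ∈ V} y_C(z). In particular, taking C to be an optimal clustering, S^+ ≤ 3 · OPT. -/
open Finset

/-!
Fix a clustering with maximal disagreement count `Y`. For `v ∈ N_u^+` in the cluster of `u`,
every vertex on which `N_u^+` and `N_v^+` differ is a disagreement at `u` or at `v`, so
`d_uv ≤ 2Y / |N_u^+|`, and these `v` contribute at most `2Y`. The other `v ∈ N_u^+` are
positive edges cut at `u`, at most `Y` of them, each with `d_uv ≤ 1`.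
-/

section CorrelationClustering

variable {V : Type*} [Fintype V] (pos : V → V → Bool)

theorem card_Np_add_card_Nm (u : V) : #(Np pos u) + #(Nm pos u) = Fintype.card V :=
  card_filter_add_card_filter_not _

theorem Np_nonempty (hrefl : ∀ u, pos u u = true) (u : V) : (Np pos u).Nonempty :=
  ⟨u, by simp [Np, hrefl]⟩

variable [DecidableEq V]

theorem card_inter_Np_add_card_inter_Nm (s : Finset V) (v : V) :
    #(s ∩ Np pos v) + #(s ∩ Nm pos v) = #s := by
  rw [← card_filter_add_card_filter_not (s := s) (p := fun w => pos v w)]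
  congr 2 <;> ext w <;> simp [Np, Nm]

theorem corrDist_le_one (u v : V) : corrDist pos u v ≤ 1 := by
  have hden : (#(Nm pos u ∩ Nm pos v) : ℝ) ≤ Fintype.card V := by
    exact_mod_cast card_le_univ _
  exact sub_le_self _ (div_nonneg (Nat.cast_nonneg _) (sub_nonneg.mpr hden))

/-- Away from the junk case of an empty denominator, `d_uv` is the fraction of
`N_u^+ ∪ N_v^+` lying in the symmetric difference `N_u^+ ∆ N_v^+`. -/
theorem corrDist_eq_div {u : V} (hu : (Np pos u).Nonempty) (v : V) :
    corrDist pos u v = ((#(Np pos u ∩ Nm pos v) + #(Nm pos u ∩ Np pos v) : ℕ) : ℝ) /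
      ((#(Np pos u) + #(Nm pos u ∩ Np pos v) : ℕ) : ℝ) := by
  have hPu := card_inter_Np_add_card_inter_Nm pos (Np pos u) v
  have hMu := card_inter_Np_add_card_inter_Nm pos (Nm pos u) v
  have hcard := card_Np_add_card_Nm pos u
  have hden : (Fintype.card V : ℝ) - #(Nm pos u ∩ Nm pos v)
      = ((#(Np pos u) + #(Nm pos u ∩ Np pos v) : ℕ) : ℝ) := by
    rw [sub_eq_iff_eq_add]; exact_mod_cast by omega
  have hpos : (0 : ℝ) < ((#(Np pos u) + #(Nm pos u ∩ Np pos v) : ℕ) : ℝ) := by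
    exact_mod_cast Nat.add_pos_left hu.card_pos _
  rw [corrDist, hden, eq_div_iff hpos.ne', sub_mul, div_mul_cancel₀ _ hpos.ne', one_mul]
  push_cast
  linarith [(by exact_mod_cast hPu : (#(Np pos u ∩ Np pos v) : ℝ) + #(Np pos u ∩ Nm pos v)
    = #(Np pos u))]

theorem card_filter_Np_ne_le_yC (C : V → ℕ) (u : V) :
    #((Np pos u).filter (fun v => C v ≠ C u)) ≤ yC pos C u := by
  refine card_le_card fun v hv => ?_
  simp only [Np, mem_filter, mem_univ, true_and] at hv ⊢
  exact ⟨fun h => hv.2 (h ▸ rfl), Or.inl ⟨hv.1, Ne.symm hv.2⟩⟩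

/-- Every `w` on which the positive neighbourhoods of two co-clustered vertices `u`, `v` differ
is a disagreement at `u` or at `v`: at the one it is positively joined to if `w` lies in
another cluster, and at the other one otherwise. -/
theorem card_Np_inter_Nm_add_card_Nm_inter_Np_le (hrefl : ∀ u, pos u u = true) (C : V → ℕ)
    {u v : V} (hC : C v = C u) :
    #(Np pos u ∩ Nm pos v) + #(Nm pos u ∩ Np pos v) ≤ yC pos C u + yC pos C v := by
  have hdisj : Disjoint (Np pos u ∩ Nm pos v) (Nm pos u ∩ Np pos v) := by
    rw [disjoint_left]
    intro w
    simp only [Np, Nm, mem_inter, mem_filter, mem_univ, true_and]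
    tauto
  rw [← card_union_of_disjoint hdisj]
  refine (card_le_card fun w hw => ?_).trans (card_union_le _ _)
  simp only [Np, Nm, mem_union, mem_inter, mem_filter, mem_univ, true_and] at hw ⊢
  have hu := hrefl u
  have hv := hrefl v
  by_cases hw' : C w = C u
  · rcases hw with ⟨-, h⟩ | ⟨h, -⟩
    · exact Or.inr ⟨by rintro rfl; simp_all, Or.inr ⟨h, by rw [hC, hw']⟩⟩
    · exact Or.inl ⟨by rintro rfl; simp_all, Or.inr ⟨h, hw'.symm⟩⟩
  · rcases hw with ⟨h, -⟩ | ⟨-, h⟩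
    · exact Or.inl ⟨by rintro rfl; simp_all, Or.inl ⟨h, Ne.symm hw'⟩⟩
    · exact Or.inr ⟨by rintro rfl; simp_all, Or.inl ⟨h, by rw [hC]; exact Ne.symm hw'⟩⟩

theorem corrDist_le_of_sameCluster (hrefl : ∀ u, pos u u = true) (C : V → ℕ) {u v : V}
    (hC : C v = C u) :
    corrDist pos u v ≤ ((yC pos C u + yC pos C v : ℕ) : ℝ) / #(Np pos u) := by
  have hu := Np_nonempty pos hrefl u
  rw [corrDist_eq_div pos hu]
  refine div_le_div₀ (Nat.cast_nonneg _) ?_ (by exact_mod_cast hu.card_pos) ?_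
  · exact_mod_cast card_Np_inter_Nm_add_card_Nm_inter_Np_le pos hrefl C hC
  · exact_mod_cast Nat.le_add_right _ _

theorem sum_corrDist_sameCluster_le (hrefl : ∀ u, pos u u = true) (C : V → ℕ) (u : V) :
    ∑ v ∈ (Np pos u).filter (fun v => C v = C u), corrDist pos u v
      ≤ 2 * ((univ.sup (yC pos C) : ℕ) : ℝ) := by
  set Y := univ.sup (yC pos C)
  have hY : ∀ v, yC pos C v ≤ Y := fun v => le_sup (mem_univ v)
  have hterm : ∀ v ∈ (Np pos u).filter (fun v => C v = C u),
      corrDist pos u v ≤ 2 * (Y : ℝ) / #(Np pos u) := by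
    intro v hv
    refine (corrDist_le_of_sameCluster pos hrefl C (mem_filter.mp hv).2).trans ?_
    gcongr
    exact_mod_cast (by linarith [hY u, hY v] : yC pos C u + yC pos C v ≤ 2 * Y)
  calc ∑ v ∈ (Np pos u).filter (fun v => C v = C u), corrDist pos u v
      ≤ #((Np pos u).filter (fun v => C v = C u)) * (2 * (Y : ℝ) / #(Np pos u)) := by
        simpa using sum_le_card_nsmul _ _ _ hterm
    _ ≤ #(Np pos u) * (2 * (Y : ℝ) / #(Np pos u)) := by
        gcongr ?_ * _
        exact_mod_cast card_filter_le _ _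
    _ = 2 * Y := mul_div_cancel₀ _ (by exact_mod_cast (Np_nonempty pos hrefl u).card_pos.ne')

theorem sum_corrDist_otherCluster_le (C : V → ℕ) (u : V) :
    ∑ v ∈ (Np pos u).filter (fun v => ¬C v = C u), corrDist pos u v
      ≤ ((univ.sup (yC pos C) : ℕ) : ℝ) :=
  calc ∑ v ∈ (Np pos u).filter (fun v => ¬C v = C u), corrDist pos u v
      ≤ #((Np pos u).filter (fun v => C v ≠ C u)) := by
        simpa using sum_le_card_nsmul _ _ _ fun v _ => corrDist_le_one pos u v
    _ ≤ ((univ.sup (yC pos C) : ℕ) : ℝ) := by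
        exact_mod_cast (card_filter_Np_ne_le_yC pos C u).trans (le_sup (mem_univ u))

theorem sum_corrDist_Np_le (hrefl : ∀ u, pos u u = true) (C : V → ℕ) (u : V) :
    ∑ v ∈ Np pos u, corrDist pos u v ≤ 3 * ((univ.sup (yC pos C) : ℕ) : ℝ) := by
  rw [← sum_filter_add_sum_filter_not _ (fun v => C v = C u)]
  linarith [sum_corrDist_sameCluster_le pos hrefl C u, sum_corrDist_otherCluster_le pos C u]

theorem exists_sup_yC_eq_OPT : ∃ C : V → ℕ, univ.sup (yC pos C) = OPT pos := by
  obtain ⟨C, hC⟩ := Nat.sInf_mem (s := {k | ∃ C : V → ℕ, k = univ.sup (yC pos C)})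
    ⟨_, fun _ => 0, rfl⟩
  exact ⟨C, hC.symm⟩

end CorrelationClustering

theorem sum_plus_le_general
    {V : Type*} [Fintype V] [DecidableEq V] (pos : V → V → Bool)
    (hrefl : ∀ u, pos u u = true)
    (u : V) :
    (∀ C : V → ℕ,
      (∑ v ∈ Np pos u, corrDist pos u v) ≤ 3 * ((Finset.univ.sup (yC pos C) : ℕ) : ℝ)) ∧
    (∑ v ∈ Np pos u, corrDist pos u v) ≤ 3 * (OPT pos : ℝ) := by
  obtain ⟨C, hC⟩ := exists_sup_yC_eq_OPT pos
  exact ⟨fun C => sum_corrDist_Np_le pos hrefl C u, hC ▸ sum_corrDist_Np_le pos hrefl C u⟩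

/-- the positive-side fractional cost is at most `3 · max_z y_C(z)`,
and in particular at most `3 · OPT`. -/
theorem sum_plus_le
    {V : Type*} [Fintype V] [DecidableEq V] (pos : V → V → Bool)
    (hsymm : ∀ u v, pos u v = pos v u) (hrefl : ∀ u, pos u u = true)
    (u : V) :
    (∀ C : V → ℕ,
      (∑ v ∈ Np pos u, corrDist pos u v) ≤ 3 * ((Finset.univ.sup (yC pos C) : ℕ) : ℝ)) ∧
    (∑ v ∈ Np pos u, corrDist pos u v) ≤ 3 * (OPT pos : ℝ) :=
  sum_plus_le_general pos hrefl u
end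

section
/- For every clustering C of V and every vertex u ∈ V, the negative-side fractional cost satisfies S^- := Σ_{v ∈ N_u^-} (1 − d_uv) ≤ 5 · max_{z ∈ V} y_C(z). In particular, taking C to be an optimal clustering, S^- ≤ 5 · OPT. -/
open Finset

/-!
Write `1 - d_uv = |N_u⁺ ∩ N_v⁺| / |N_u⁺ ∪ N_v⁺|` and let `M` bound every `y_C(z)`. Negative
neighbours `v` of `u` in the cluster of `u` are disagreements at `u`, so they contribute at most
`M`. The term of any other `v` is spread as a charge `1 / |N_u⁺ ∪ N_v⁺| ≤ 1 / |N_u⁺|` on each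
common positive neighbour `w`. Charges with `C(v) ≠ C(w)` are disagreements at `w`, at most `M`
per `w`, hence at most `M` in total. Charges with `C(v) = C(w)` force `C(w) ≠ C(u)`, which holds
for at most `min(M, |N_u⁺|)` vertices `w`. A cluster of size `k` lies in `N_v⁺` up to `M`
disagreements at `v`, so `|N_u⁺ ∪ N_v⁺| ≥ max(|N_u⁺|, k - M)` and each such `w` collects at most
`2 max(M, |N_u⁺|) / |N_u⁺|`. Altogether the sum is at most `4M`.
-/

section Neighborhoods

variable {V : Type*} [Fintype V] {pos : V → V → Bool}

@[simp] lemma mem_Np {u v : V} : v ∈ Np pos u ↔ pos u v = true := by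
  simp [Np]

@[simp] lemma mem_Nm {u v : V} : v ∈ Nm pos u ↔ pos u v = false := by
  simp [Nm]

lemma self_mem_Np (hrefl : ∀ u, pos u u = true) (u : V) : u ∈ Np pos u :=
  mem_Np.2 (hrefl u)

lemma mem_Np_comm (hsymm : ∀ u v, pos u v = pos v u) {u v : V} :
    v ∈ Np pos u ↔ u ∈ Np pos v := by
  simp [hsymm u v]

end Neighborhoods

lemma one_sub_corrDist {V : Type*} [Fintype V] [DecidableEq V] (pos : V → V → Bool) (u v : V) :
    1 - corrDist pos u v = (#(Np pos u ∩ Np pos v) : ℝ) / #(Np pos u ∪ Np pos v) := by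
  have hcompl : Nm pos u ∩ Nm pos v = (Np pos u ∪ Np pos v)ᶜ := by
    ext x
    simp
  rw [corrDist, hcompl, card_compl, Nat.cast_sub (card_le_univ _), sub_sub_cancel, sub_sub_cancel]

section Disagreements

variable {V : Type*} [Fintype V] [DecidableEq V] {pos : V → V → Bool} (C : V → ℕ)

lemma card_le_yC {w : V} {s : Finset V}
    (hs : ∀ v ∈ s, v ≠ w ∧ ((pos w v ∧ C w ≠ C v) ∨ (¬ pos w v ∧ C w = C v))) :
    #s ≤ yC pos C w :=
  card_le_card fun v hv => mem_filter.2 ⟨mem_univ v, hs v hv⟩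

lemma card_Np_filter_ne_le_yC (w : V) : #{v ∈ Np pos w | C v ≠ C w} ≤ yC pos C w :=
  card_le_yC C fun v hv => by
    obtain ⟨hwv, hC⟩ := mem_filter.1 hv
    exact ⟨by rintro rfl; exact hC rfl, Or.inl ⟨mem_Np.1 hwv, Ne.symm hC⟩⟩

lemma card_Nm_filter_eq_le_yC (hrefl : ∀ u, pos u u = true) (w : V) :
    #{v ∈ Nm pos w | C v = C w} ≤ yC pos C w :=
  card_le_yC C fun v hv => by
    obtain ⟨hwv, hC⟩ := mem_filter.1 hv
    exact ⟨by rintro rfl; simp [hrefl] at hwv, Or.inr ⟨by simpa using hwv, hC.symm⟩⟩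

lemma card_cluster_le (hrefl : ∀ u, pos u u = true) (v : V) :
    #{x | C x = C v} ≤ #(Np pos v) + yC pos C v :=
  calc #{x | C x = C v} ≤ #(Np pos v ∪ {x ∈ Nm pos v | C x = C v}) :=
        card_le_card fun x hx => by cases h : pos v x <;> simp_all
    _ ≤ #(Np pos v) + yC pos C v :=
        (card_union_le _ _).trans (by gcongr; exact card_Nm_filter_eq_le_yC C hrefl v)

end Disagreements

lemma sum_card_inter_div_card_union {α ι : Type*} [DecidableEq α] (s : Finset α)
    (t : ι → Finset α) (T : Finset ι) :
    ∑ i ∈ T, (#(s ∩ t i) : ℝ) / #(s ∪ t i) = ∑ a ∈ s, ∑ i ∈ T with a ∈ t i, 1 / (#(s ∪ t i) : ℝ) :=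
  calc ∑ i ∈ T, (#(s ∩ t i) : ℝ) / #(s ∪ t i)
      = ∑ i ∈ T, ∑ a ∈ s ∩ t i, 1 / (#(s ∪ t i) : ℝ) := by simp [div_eq_mul_inv]
    _ = _ := sum_comm' fun i a => by simp only [mem_inter, mem_filter]; tauto

lemma div_le_two_mul_max_div {n x k M : ℝ} (hn : 0 < n) (hnx : n ≤ x) (hkx : k ≤ x + M) :
    k / x ≤ 2 * max M n / n := by
  rw [div_le_div_iff₀ (hn.trans_le hnx) hn]
  have := le_max_left M n
  have := le_max_right M n
  rcases le_total k (2 * M) with h | h <;> nlinarith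

lemma sum_one_div_le_two_mul_max_div {ι : Type*} (Q : Finset ι) (x : ι → ℝ) {n k M : ℝ}
    (hn : 0 < n) (hQ : #Q ≤ k) (hx : ∀ i ∈ Q, n ≤ x i ∧ k ≤ x i + M) :
    ∑ i ∈ Q, 1 / x i ≤ 2 * max M n / n := by
  rcases Q.eq_empty_or_nonempty with rfl | hQne
  · simp only [sum_empty]
    positivity
  have hk : 0 < k := (Nat.cast_pos.2 hQne.card_pos).trans_le hQ
  calc ∑ i ∈ Q, 1 / x i ≤ #Q • (2 * max M n / n / k) :=
        sum_le_card_nsmul _ _ _ fun i hi => by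
          rw [le_div_iff₀ hk, one_div_mul_eq_div]
          exact div_le_two_mul_max_div hn (hx i hi).1 (hx i hi).2
    _ ≤ k * (2 * max M n / n / k) := by
        rw [nsmul_eq_mul]
        gcongr
    _ = 2 * max M n / n := by field_simp

lemma mul_two_mul_max_div_le {m M n : ℝ} (hn : 0 < n) (hmM : m ≤ M) (hmn : m ≤ n) :
    m * (2 * max M n / n) ≤ 2 * M := by
  rw [← mul_div_assoc, div_le_iff₀ hn]
  rcases max_cases M n with ⟨h, _⟩ | ⟨h, _⟩ <;> rw [h] <;> nlinarith

section NegativeSide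

variable {V : Type*} [Fintype V] [DecidableEq V] {pos : V → V → Bool} {C : V → ℕ} {M : ℕ}

lemma sum_Nm_filter_eq_le (hrefl : ∀ u, pos u u = true) (hM : ∀ w, yC pos C w ≤ M) (u : V) :
    ∑ v ∈ Nm pos u with C v = C u, (#(Np pos u ∩ Np pos v) : ℝ) / #(Np pos u ∪ Np pos v) ≤ M :=
  calc _ ≤ #{v ∈ Nm pos u | C v = C u} • (1 : ℝ) :=
        sum_le_card_nsmul _ _ _ fun v _ =>
          div_le_one_of_le₀ (by exact_mod_cast card_le_card inter_subset_union) (Nat.cast_nonneg _)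
    _ ≤ M := by
        rw [nsmul_one]
        exact_mod_cast (card_Nm_filter_eq_le_yC C hrefl u).trans (hM u)

lemma sum_one_div_card_union_le_of_ne (hsymm : ∀ u v, pos u v = pos v u)
    (hrefl : ∀ u, pos u u = true) (hM : ∀ w, yC pos C w ≤ M) (u w : V) (R : Finset V)
    (hR : ∀ v ∈ R, w ∈ Np pos v ∧ C v ≠ C w) :
    ∑ v ∈ R, 1 / (#(Np pos u ∪ Np pos v) : ℝ) ≤ M / #(Np pos u) := by
  have hn : (0 : ℝ) < #(Np pos u) := by exact_mod_cast card_pos.2 ⟨u, self_mem_Np hrefl u⟩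
  have hR_card : #R ≤ M :=
    (card_le_card fun v hv => mem_filter.2 ⟨(mem_Np_comm hsymm).1 (hR v hv).1, (hR v hv).2⟩).trans
      ((card_Np_filter_ne_le_yC C w).trans (hM w))
  calc ∑ v ∈ R, 1 / (#(Np pos u ∪ Np pos v) : ℝ) ≤ #R • (1 / (#(Np pos u) : ℝ)) :=
        sum_le_card_nsmul _ _ _ fun v _ =>
          one_div_le_one_div_of_le hn (by exact_mod_cast card_le_card subset_union_left)
    _ ≤ M / #(Np pos u) := by
        rw [nsmul_eq_mul, mul_one_div]
        gcongr

lemma sum_one_div_card_union_le_of_eq (hrefl : ∀ u, pos u u = true) (hM : ∀ w, yC pos C w ≤ M)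
    (u w : V) (R : Finset V) (hR : ∀ v ∈ R, C v = C w) :
    ∑ v ∈ R, 1 / (#(Np pos u ∪ Np pos v) : ℝ) ≤ 2 * max (M : ℝ) #(Np pos u) / #(Np pos u) := by
  have hn : (0 : ℝ) < #(Np pos u) := by exact_mod_cast card_pos.2 ⟨u, self_mem_Np hrefl u⟩
  refine sum_one_div_le_two_mul_max_div R _ hn (k := #{x | C x = C w}) ?_
    fun v hv => ⟨?_, ?_⟩
  · exact_mod_cast card_le_card fun v hv => by simp [hR v hv]
  · exact_mod_cast card_le_card subset_union_left
  · have hcluster := card_cluster_le C hrefl v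
    rw [hR v hv] at hcluster
    exact_mod_cast hcluster.trans (add_le_add (card_le_card subset_union_right) (hM v))

lemma sum_Nm_filter_ne_le (hsymm : ∀ u v, pos u v = pos v u) (hrefl : ∀ u, pos u u = true)
    (hM : ∀ w, yC pos C w ≤ M) (u : V) :
    ∑ v ∈ Nm pos u with C v ≠ C u, (#(Np pos u ∩ Np pos v) : ℝ) / #(Np pos u ∪ Np pos v)
      ≤ 3 * M := by
  have hn : (0 : ℝ) < #(Np pos u) := by exact_mod_cast card_pos.2 ⟨u, self_mem_Np hrefl u⟩
  set B : ℝ := 2 * max (M : ℝ) #(Np pos u) / #(Np pos u)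
  have hw : ∀ w ∈ Np pos u,
      ∑ v ∈ {v ∈ Nm pos u | C v ≠ C u} with w ∈ Np pos v, 1 / (#(Np pos u ∪ Np pos v) : ℝ)
        ≤ (if C w ≠ C u then B else 0) + M / #(Np pos u) := by
    intro w _
    rw [← sum_filter_add_sum_filter_not _ (fun v => C v = C w)]
    refine add_le_add ?_ (sum_one_div_card_union_le_of_ne hsymm hrefl hM u w _ fun v hv => ?_)
    · split_ifs with hwu
      · exact sum_one_div_card_union_le_of_eq hrefl hM u w _ fun v hv => (mem_filter.1 hv).2
      · refine (sum_eq_zero fun v hv => ?_).le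
        simp only [mem_filter] at hv
        exact absurd (hv.2.trans (not_not.1 hwu)) hv.1.1.2
    · simp only [mem_filter] at hv
      exact ⟨hv.1.2, hv.2⟩
  have hcard_mul : (#{w ∈ Np pos u | C w ≠ C u} : ℝ) * B ≤ 2 * M :=
    mul_two_mul_max_div_le hn
      (by exact_mod_cast (card_Np_filter_ne_le_yC C u).trans (hM u))
      (by exact_mod_cast card_filter_le _ _)
  calc _ = ∑ w ∈ Np pos u, ∑ v ∈ {v ∈ Nm pos u | C v ≠ C u} with w ∈ Np pos v,
          1 / (#(Np pos u ∪ Np pos v) : ℝ) := sum_card_inter_div_card_union _ _ _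
    _ ≤ ∑ w ∈ Np pos u, ((if C w ≠ C u then B else 0) + M / #(Np pos u)) := sum_le_sum hw
    _ = #{w ∈ Np pos u | C w ≠ C u} * B + M := by
        rw [sum_add_distrib, ← sum_filter, sum_const, sum_const, nsmul_eq_mul, nsmul_eq_mul]
        field_simp
    _ ≤ 3 * M := by linarith

lemma sum_Nm_card_inter_div_card_union_le (hsymm : ∀ u v, pos u v = pos v u)
    (hrefl : ∀ u, pos u u = true) (hM : ∀ w, yC pos C w ≤ M) (u : V) :
    ∑ v ∈ Nm pos u, (#(Np pos u ∩ Np pos v) : ℝ) / #(Np pos u ∪ Np pos v) ≤ 4 * M := by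
  rw [← sum_filter_add_sum_filter_not _ (fun v => C v = C u)]
  linarith [sum_Nm_filter_eq_le hrefl hM u, sum_Nm_filter_ne_le hsymm hrefl hM u]

end NegativeSide

/-- the negative-side fractional cost is at most `5 · max_z y_C(z)`,
and in particular at most `5 · OPT`. -/
theorem sum_minus_le
    {V : Type*} [Fintype V] [DecidableEq V] (pos : V → V → Bool)
    (hsymm : ∀ u v, pos u v = pos v u) (hrefl : ∀ u, pos u u = true)
    (u : V) :
    (∀ C : V → ℕ,
      (∑ v ∈ Nm pos u, (1 - corrDist pos u v)) ≤ 5 * ((Finset.univ.sup (yC pos C) : ℕ) : ℝ)) ∧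
    (∑ v ∈ Nm pos u, (1 - corrDist pos u v)) ≤ 5 * (OPT pos : ℝ) := by
  have hmain : ∀ C : V → ℕ,
      (∑ v ∈ Nm pos u, (1 - corrDist pos u v)) ≤ 5 * ((univ.sup (yC pos C) : ℕ) : ℝ) := by
    intro C
    simp_rw [one_sub_corrDist]
    have := sum_Nm_card_inter_div_card_union_le hsymm hrefl (C := C)
      (fun w => le_sup (mem_univ w)) u
    linarith [(Nat.cast_nonneg _ : (0 : ℝ) ≤ univ.sup (yC pos C))]
  obtain ⟨C, hC⟩ : ∃ C : V → ℕ, OPT pos = univ.sup (yC pos C) :=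
    Nat.sInf_mem (s := {k | ∃ C : V → ℕ, k = univ.sup (yC pos C)}) ⟨_, fun _ => 0, rfl⟩
  exact ⟨hmain, hC ▸ hmain C⟩
end

section
/- There exists δ0 > 0 such that for every 0 < δ ≤ δ0 the following holds. Set δ1 = 3 + δ, δ2 = δ, and let r = r(δ1,δ2) be given by the formula r = (1 − δ2 − δ1δ2 − δ1²δ2 − δ1³δ2) / (δ1² + δ1³(δ1+1) + δ1 + 1). Then for every symmetric function d : V × V → [0,1] with d_uu = 0 for all u that satisfies the (δ1,δ2)-approximate triangle inequality, there exists a clustering C of V such that for every u ∈ V, y_C(u) ≤ (1/r) · Σ_{v ∈ V} d̂_uv, where d̂_uv = d_uv if (u,v) is positive and d̂_uv = 1 − d_uv if (u,v) is negative. Moreover r(δ1,δ2) → 1/121 as δ → 0. -/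
open Finset

section KMZhelp

attribute [local instance] Classical.propDecidable

variable {V : Type} [Fintype V] [DecidableEq V]

/-- Ball of radius `2x` around `w` inside `S`. -/
noncomputable def ballOf (d : V → V → ℝ) (x : ℝ) (S : Finset V) (w : V) : Finset V :=
  S.filter (fun v => d w v ≤ 2 * x)

/-- Pivot: a vertex of `S` whose ball has maximum cardinality. -/
noncomputable def pivOf [Nonempty V] (d : V → V → ℝ) (x : ℝ) (S : Finset V) : V :=
  if h : S.Nonempty then
    (Finset.exists_max_image S (fun w => (ballOf d x S w).card) h).choose
  else Classical.arbitrary V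

lemma pivOf_mem [Nonempty V] {d : V → V → ℝ} {x : ℝ} {S : Finset V} (h : S.Nonempty) :
    pivOf d x S ∈ S := by
  rw [pivOf, dif_pos h]
  exact (Finset.exists_max_image S (fun w => (ballOf d x S w).card) h).choose_spec.1

lemma pivOf_max [Nonempty V] {d : V → V → ℝ} {x : ℝ} {S : Finset V} (h : S.Nonempty)
    (w : V) (hw : w ∈ S) :
    (ballOf d x S w).card ≤ (ballOf d x S (pivOf d x S)).card := by
  rw [pivOf, dif_pos h]
  exact (Finset.exists_max_image S (fun w => (ballOf d x S w).card) h).choose_spec.2 w hw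

/-- Cluster formed from `S`: the ball of radius `ρ` around the pivot. -/
noncomputable def clusterOf [Nonempty V] (d : V → V → ℝ) (x ρ : ℝ) (S : Finset V) : Finset V :=
  S.filter (fun v => d (pivOf d x S) v ≤ ρ)

lemma clusterOf_subset [Nonempty V] (d : V → V → ℝ) (x ρ : ℝ) (S : Finset V) :
    clusterOf d x ρ S ⊆ S := Finset.filter_subset _ _

/-- Alive vertex sets of the iterative ball-carving algorithm. -/
noncomputable def stepsKMZ [Nonempty V] (d : V → V → ℝ) (x ρ : ℝ) : ℕ → Finset V
  | 0 => Finset.univ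
  | (t+1) => stepsKMZ d x ρ t \ clusterOf d x ρ (stepsKMZ d x ρ t)

set_option maxHeartbeats 2000000 in
theorem kmz_main
    (pos : V → V → Bool) (hposd : ∀ u, pos u u = true)
    (d : V → V → ℝ) (hsym : ∀ u v, d u v = d v u) (hd0 : ∀ u, d u u = 0)
    (hrange : ∀ u v, 0 ≤ d u v ∧ d u v ≤ 1)
    (δ1 δ2 x : ℝ)
    (htri : ∀ u v w, d u v ≤ δ1 * (d u w + d w v) + δ2)
    (hδ1 : 1 ≤ δ1) (hδ2 : 0 ≤ δ2) (hx : 0 < x)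
    (hF2 : δ1 * ((δ1*(2*x+x)+δ2) + (δ1*(2*x+x)+δ2)) + δ2 + 2*x ≤ 1)
    (hF3 : δ1 * ((δ1*(x+(δ1*(2*x+x)+δ2))+δ2) + 2*x) + δ2 + x ≤ 1) :
    ∃ C : V → ℕ, ∀ u : V,
      (yC pos C u : ℝ) ≤ (1/x) * ∑ v, (if pos u v then d u v else 1 - d u v) := by
  cases isEmpty_or_nonempty V with
  | inl hemp => exact ⟨fun _ => 0, fun u => (hemp.false u).elim⟩
  | inr hne =>
  set ρ : ℝ := δ1*(2*x+x)+δ2 with hρdef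
  have hρ0 : 0 ≤ ρ := by nlinarith
  have hax : 2*x ≤ ρ := by nlinarith
  set st : ℕ → Finset V := stepsKMZ d x ρ with hst
  set cl : ℕ → Finset V := fun t => clusterOf d x ρ (st t) with hcl
  have hcl_sub : ∀ t, cl t ⊆ st t := fun t => Finset.filter_subset _ _
  have hstep : ∀ t, st (t+1) = st t \ cl t := fun t => rfl
  have hst_mono : ∀ s t : ℕ, s ≤ t → st t ⊆ st s := by
    intro s t h
    induction h with
    | refl => exact subset_rfl
    | step h ih =>
      rename_i m _
      exact subset_trans (by rw [hstep]; exact Finset.sdiff_subset) ih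
  have hq_in_cl : ∀ t, (st t).Nonempty → pivOf d x (st t) ∈ cl t := by
    intro t h
    refine Finset.mem_filter.mpr ⟨pivOf_mem h, ?_⟩
    rw [hd0]; exact hρ0
  have hcard_lt : ∀ t, (st t).Nonempty → (st (t+1)).card < (st t).card := by
    intro t h
    rw [hstep]
    exact Finset.card_lt_card (Finset.sdiff_ssubset (hcl_sub t) ⟨_, hq_in_cl t h⟩)
  have hex : ∀ v : V, ∃ t, v ∈ cl t := by
    intro v
    by_contra hno
    push_neg at hno
    have hin : ∀ t, v ∈ st t := by
      intro t
      induction t with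
      | zero => exact Finset.mem_univ v
      | succ n ih => rw [hstep]; exact Finset.mem_sdiff.mpr ⟨ih, hno n⟩
    have hdec : ∀ t, (st t).card + t ≤ (st 0).card := by
      intro t
      induction t with
      | zero => omega
      | succ n ih => have := hcard_lt n ⟨v, hin n⟩; omega
    have := hdec ((st 0).card + 1); omega
  set C : V → ℕ := fun v => Nat.find (hex v) with hCdef
  have hCmem : ∀ v, v ∈ cl (C v) := fun v => Nat.find_spec (hex v)
  have hCmin : ∀ v t, t < C v → v ∉ cl t := fun v t ht => Nat.find_min (hex v) ht
  have hmem_st : ∀ (v : V) (t : ℕ), t ≤ C v → v ∈ st t := by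
    intro v t h
    induction t with
    | zero => exact Finset.mem_univ v
    | succ n ih =>
      rw [hstep]
      exact Finset.mem_sdiff.mpr ⟨ih (by omega), hCmin v n (by omega)⟩
  have hnotin : ∀ (v : V) (t : ℕ), C v < t → v ∉ st t := by
    intro v t h hvt
    have h1 : v ∈ st (C v + 1) := hst_mono _ _ h hvt
    rw [hstep] at h1
    exact (Finset.mem_sdiff.mp h1).2 (hCmem v)
  have hcl_eq : ∀ (v : V) (t : ℕ), v ∈ cl t → C v = t := by
    intro v t hvt
    rcases lt_trichotomy (C v) t with h|h|h
    · exact ((hnotin v t h) (hcl_sub t hvt)).elim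
    · exact h
    · exact (hCmin v t h hvt).elim
  -- distance bound for vertices in a common cluster
  have hclust_dist : ∀ u v : V, C u = C v → d u v ≤ δ1*(ρ+ρ)+δ2 := by
    intro u v h
    have hu := hCmem u
    have hv := hCmem v
    rw [h] at hu
    set q := pivOf d x (st (C v)) with hq
    have hu' : d q u ≤ ρ := by
      have := (Finset.mem_filter.mp hu).2
      exact this
    have hv' : d q v ≤ ρ := (Finset.mem_filter.mp hv).2
    have huq : d u q ≤ ρ := by rw [hsym]; exact hu'
    have h3 := htri u v q
    nlinarith [mul_nonneg (by linarith : (0:ℝ) ≤ δ1) (by linarith : (0:ℝ) ≤ ρ - d u q),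
      mul_nonneg (by linarith : (0:ℝ) ≤ δ1) (by linarith : (0:ℝ) ≤ ρ - d q v)]
  refine ⟨C, fun u => ?_⟩
  set dh : V → ℝ := fun v => if pos u v then d u v else 1 - d u v with hdh
  have hdh0 : ∀ v, 0 ≤ dh v := by
    intro v
    by_cases h : pos u v <;> simp [hdh, h]
    · exact (hrange u v).1
    · linarith [(hrange u v).2]
  set N : Finset V := Finset.univ.filter (fun v => ¬ (pos u v = true) ∧ C u = C v ∧ v ≠ u)
    with hNdef
  set L : Finset V := Finset.univ.filter (fun v => (pos u v = true) ∧ C u ≠ C v ∧ x ≤ d u v)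
    with hLdef
  set Sh : Finset V := Finset.univ.filter (fun v => (pos u v = true) ∧ C u ≠ C v ∧ d u v < x)
    with hShdef
  have hyCsub : (Finset.univ.filter (fun v => v ≠ u ∧
      ((pos u v ∧ C u ≠ C v) ∨ (¬ (pos u v) ∧ C u = C v)))) ⊆ (N ∪ L) ∪ Sh := by
    intro v hv
    simp only [Finset.mem_filter, Finset.mem_univ, true_and] at hv
    simp only [Finset.mem_union, hNdef, hLdef, hShdef, Finset.mem_filter, Finset.mem_univ,
      true_and]
    rcases hv.2 with h | h
    · rcases le_or_gt x (d u v) with h2 | h2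
      · exact Or.inl (Or.inr ⟨h.1, h.2, h2⟩)
      · exact Or.inr ⟨h.1, h.2, h2⟩
    · exact Or.inl (Or.inl ⟨h.1, h.2, hv.1⟩)
  have hyC : (yC pos C u : ℝ) ≤ (N.card : ℝ) + L.card + Sh.card := by
    have h1 : yC pos C u ≤ ((N ∪ L) ∪ Sh).card := by
      rw [yC]
      exact Finset.card_le_card hyCsub
    have h2 : ((N ∪ L) ∪ Sh).card ≤ N.card + L.card + Sh.card :=
      le_trans (Finset.card_union_le _ _) (by
        have := Finset.card_union_le N L; omega)
    have := le_trans h1 h2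
    push_cast
    exact_mod_cast this
  have massN : ∀ v ∈ N, 2*x ≤ dh v := by
    intro v hv
    simp only [hNdef, Finset.mem_filter, Finset.mem_univ, true_and] at hv
    have hd := hclust_dist u v hv.2.1
    have : dh v = 1 - d u v := by simp [hdh, hv.1]
    rw [this]
    linarith
  have massL : ∀ v ∈ L, x ≤ dh v := by
    intro v hv
    simp only [hLdef, Finset.mem_filter, Finset.mem_univ, true_and] at hv
    have : dh v = d u v := by simp [hdh, hv.1]
    rw [this]; exact hv.2.2
  have hdisjNL : Disjoint N L := by
    rw [Finset.disjoint_left]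
    intro v hvN hvL
    simp only [hNdef, hLdef, Finset.mem_filter, Finset.mem_univ, true_and] at hvN hvL
    exact hvN.1 hvL.1
  have hsum_univ : ∀ T : Finset V, ∑ v ∈ T, dh v ≤ ∑ v, dh v := by
    intro T
    exact Finset.sum_le_sum_of_subset_of_nonneg (Finset.subset_univ T)
      (fun i _ _ => hdh0 i)
  have hsumN : 2*x * N.card ≤ ∑ v ∈ N, dh v := by
    have := Finset.card_nsmul_le_sum N dh (2*x) massN
    rw [nsmul_eq_mul] at this
    linarith [this]
  have hsumL : x * L.card ≤ ∑ v ∈ L, dh v := by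
    have := Finset.card_nsmul_le_sum L dh x massL
    rw [nsmul_eq_mul] at this
    linarith [this]
  -- the key inequality
  have hcore : x * ((N.card : ℝ) + L.card + Sh.card) ≤ ∑ v, dh v := by
    rcases Finset.eq_empty_or_nonempty Sh with hShE | hShE
    · -- no short cut positive edges
      have hsub : ∑ v ∈ N ∪ L, dh v ≤ ∑ v, dh v := hsum_univ _
      rw [Finset.sum_union hdisjNL] at hsub
      rw [hShE]
      simp only [Finset.card_empty, Nat.cast_zero, add_zero]
      nlinarith [hsumN, hsumL, hsub,
        mul_nonneg hx.le (Nat.cast_nonneg N.card : (0:ℝ) ≤ N.card)]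
    · -- there are short cut positive edges
      have hinsne : ((insert u Sh).image C).Nonempty :=
        ((Finset.insert_nonempty u Sh).image C)
      set T : ℕ := ((insert u Sh).image C).min' hinsne with hT
      have hTle : ∀ v ∈ insert u Sh, T ≤ C v := fun v hv =>
        Finset.min'_le _ _ (Finset.mem_image_of_mem C hv)
      obtain ⟨z, hzmem, hzT⟩ : ∃ z ∈ insert u Sh, C z = T := by
        have h := Finset.min'_mem ((insert u Sh).image C) hinsne
        rw [Finset.mem_image] at h
        obtain ⟨z, hz1, hz2⟩ := h
        exact ⟨z, hz1, hz2⟩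
      have huS : u ∈ st T := hmem_st u T (hTle u (Finset.mem_insert_self u Sh))
      have hSne : (st T).Nonempty := ⟨u, huS⟩
      set q : V := pivOf d x (st T) with hqdef
      set bu : Finset V := ballOf d x (st T) u with hbu
      set bq : Finset V := ballOf d x (st T) q with hbq
      have hcardb : bu.card ≤ bq.card := pivOf_max hSne u huS
      have hDD : (bu \ bq).card ≤ (bq \ bu).card := by
        have h1 := Finset.card_sdiff_add_card_inter bu bq
        have h2 := Finset.card_sdiff_add_card_inter bq bu
        rw [Finset.inter_comm] at h2
        omega
      set D : Finset V := bq \ bu with hDdef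
      have hDfacts : ∀ w ∈ D, w ∈ st T ∧ d q w ≤ 2*x ∧ 2*x < d u w := by
        intro w hw
        rw [hDdef, Finset.mem_sdiff] at hw
        obtain ⟨hw1, hw2⟩ := hw
        rw [hbq, ballOf, Finset.mem_filter] at hw1
        refine ⟨hw1.1, hw1.2, ?_⟩
        by_contra hc
        push_neg at hc
        exact hw2 (by rw [hbu, ballOf, Finset.mem_filter]; exact ⟨hw1.1, hc⟩)
      have hDclu : ∀ w ∈ D, C w = T := by
        intro w hw
        refine hcl_eq w T ?_
        have h := hDfacts w hw
        exact Finset.mem_filter.mpr ⟨h.1, le_trans h.2.1 hax⟩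
      have hDne : ∀ w ∈ D, w ≠ u := by
        intro w hw heq
        have h := (hDfacts w hw).2.2
        rw [heq, hd0] at h
        linarith
      set Dp : Finset V := D.filter (fun w => pos u w = true) with hDp
      set Dm : Finset V := D.filter (fun w => ¬ (pos u w = true)) with hDm
      have hDsplit : (D.card : ℝ) = Dp.card + Dm.card := by
        exact_mod_cast (Finset.card_filter_add_card_filter_not
          (s := D) (fun w => pos u w = true)).symm
      have massDp : ∀ w ∈ Dp, 2*x ≤ dh w := by
        intro w hw
        rw [hDp, Finset.mem_filter] at hw
        have h1 := (hDfacts w hw.1).2.2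
        have h2 : dh w = d u w := by simp [hdh, hw.2]
        rw [h2]; linarith
      have hsumDp : 2*x * Dp.card ≤ ∑ v ∈ Dp, dh v := by
        have h := Finset.card_nsmul_le_sum Dp dh (2*x) massDp
        rw [nsmul_eq_mul] at h
        linarith [h]
      by_cases hA : d q u ≤ ρ
      · -- Case A : u is clustered at time T together with the pivot q
        have huT : C u = T := hcl_eq u T (Finset.mem_filter.mpr ⟨huS, hA⟩)
        have hShbu : Sh ⊆ bu \ bq := by
          intro v hv
          have hvS : v ∈ st T := hmem_st v T (hTle v (Finset.mem_insert_of_mem hv))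
          simp only [hShdef, Finset.mem_filter, Finset.mem_univ, true_and] at hv
          rw [Finset.mem_sdiff]
          constructor
          · rw [hbu, ballOf, Finset.mem_filter]
            exact ⟨hvS, by linarith [hv.2.2]⟩
          · intro hvbq
            rw [hbq, ballOf, Finset.mem_filter] at hvbq
            have hvcl : v ∈ cl T := Finset.mem_filter.mpr ⟨hvS, le_trans hvbq.2 hax⟩
            exact hv.2.1 (by rw [huT, hcl_eq v T hvcl])
        have hShD : (Sh.card : ℝ) ≤ D.card := by
          exact_mod_cast le_trans (Finset.card_le_card hShbu) hDD
        have hDmN : Dm ⊆ N := by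
          intro w hw
          rw [hDm, Finset.mem_filter] at hw
          simp only [hNdef, Finset.mem_filter, Finset.mem_univ, true_and]
          exact ⟨hw.2, by rw [huT]; exact (hDclu w hw.1).symm, hDne w hw.1⟩
        have hcDm : (Dm.card : ℝ) ≤ N.card := by
          exact_mod_cast Finset.card_le_card hDmN
        have hdisjNDp : Disjoint N Dp := by
          rw [Finset.disjoint_left]
          intro v hvN hvDp
          rw [hDp, Finset.mem_filter] at hvDp
          simp only [hNdef, Finset.mem_filter, Finset.mem_univ, true_and] at hvN
          exact hvN.1 hvDp.2
        have hdisjLDp : Disjoint L Dp := by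
          rw [Finset.disjoint_left]
          intro v hvL hvDp
          rw [hDp, Finset.mem_filter] at hvDp
          simp only [hLdef, Finset.mem_filter, Finset.mem_univ, true_and] at hvL
          exact hvL.2.1 (by rw [huT]; exact (hDclu v hvDp.1).symm)
        have hdisj2 : Disjoint (N ∪ L) Dp :=
          Finset.disjoint_union_left.mpr ⟨hdisjNDp, hdisjLDp⟩
        have hsub : ∑ v ∈ (N ∪ L) ∪ Dp, dh v ≤ ∑ v, dh v := hsum_univ _
        rw [Finset.sum_union hdisj2, Finset.sum_union hdisjNL] at hsub
        have e1 : x * (Sh.card : ℝ) ≤ x * D.card :=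
          mul_le_mul_of_nonneg_left hShD hx.le
        have e2 : x * (Dm.card : ℝ) ≤ x * N.card :=
          mul_le_mul_of_nonneg_left hcDm hx.le
        have e3 : x * (D.card : ℝ) = x * Dp.card + x * Dm.card := by
          rw [hDsplit]; ring
        have e4 : (0:ℝ) ≤ x * Dp.card :=
          mul_nonneg hx.le (Nat.cast_nonneg Dp.card)
        linarith [hsumN, hsumL, hsumDp, hsub]
      · -- Case B : u is not clustered at time T
        have huT : C u ≠ T := by
          intro h
          have hm := hCmem u
          rw [h] at hm
          exact hA (Finset.mem_filter.mp hm).2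
        have hzSh : z ∈ Sh := by
          rcases Finset.mem_insert.mp hzmem with h | h
          · exact absurd (h ▸ hzT) huT
          · exact h
        have hzcl : z ∈ cl T := by
          have hm := hCmem z
          rwa [hzT] at hm
        have hdqz : d q z ≤ ρ := (Finset.mem_filter.mp hzcl).2
        have hduz : d u z < x := by
          have h := hzSh
          simp only [hShdef, Finset.mem_filter, Finset.mem_univ, true_and] at h
          exact h.2.2
        have hdzq : d z q ≤ ρ := by rw [hsym z q]; exact hdqz
        have hduq : d u q ≤ δ1 * (x + ρ) + δ2 := by
          have h3 := htri u q z
          nlinarith [mul_nonneg (by linarith : (0:ℝ) ≤ δ1)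
              (by linarith : (0:ℝ) ≤ x - d u z),
            mul_nonneg (by linarith : (0:ℝ) ≤ δ1)
              (by linarith : (0:ℝ) ≤ ρ - d z q)]
        have hubq : u ∉ bq := by
          intro h
          rw [hbq, ballOf, Finset.mem_filter] at h
          exact hA (le_trans h.2 hax)
        have hinsbu : insert u Sh ⊆ bu \ bq := by
          intro v hv
          have hvS : v ∈ st T := hmem_st v T (hTle v hv)
          rcases Finset.mem_insert.mp hv with h | h
          · subst h
            rw [Finset.mem_sdiff]
            refine ⟨?_, hubq⟩
            rw [hbu, ballOf, Finset.mem_filter]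
            exact ⟨hvS, by rw [hd0]; linarith⟩
          · have hvSh := h
            simp only [hShdef, Finset.mem_filter, Finset.mem_univ, true_and] at h
            rw [Finset.mem_sdiff]
            refine ⟨by rw [hbu, ballOf, Finset.mem_filter]; exact ⟨hvS, by linarith [h.2.2]⟩, ?_⟩
            intro hvbq
            rw [hbq, ballOf, Finset.mem_filter] at hvbq
            apply hA
            have h4 := htri q u v
            have hs : d v u = d u v := hsym v u
            rw [hρdef]
            nlinarith [mul_nonneg (by linarith : (0:ℝ) ≤ δ1)
                (by linarith [hvbq.2] : (0:ℝ) ≤ 2*x - d q v),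
              mul_nonneg (by linarith : (0:ℝ) ≤ δ1)
                (by linarith [h.2.2] : (0:ℝ) ≤ x - d v u)]
        have hShD : (Sh.card : ℝ) ≤ D.card := by
          have h5 : Sh ⊆ bu \ bq := subset_trans (Finset.subset_insert u Sh) hinsbu
          exact_mod_cast le_trans (Finset.card_le_card h5) hDD
        have hDnotU : ∀ w ∈ D, C u ≠ C w := by
          intro w hw h
          exact huT (h.trans (hDclu w hw))
        have hDpL : Dp ⊆ L := by
          intro w hw
          rw [hDp, Finset.mem_filter] at hw
          simp only [hLdef, Finset.mem_filter, Finset.mem_univ, true_and]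
          exact ⟨hw.2, hDnotU w hw.1, by linarith [(hDfacts w hw.1).2.2]⟩
        have massDm : ∀ w ∈ Dm, x ≤ dh w := by
          intro w hw
          rw [hDm, Finset.mem_filter] at hw
          have hf := hDfacts w hw.1
          have h6 := htri u w q
          have h7 : dh w = 1 - d u w := by simp [hdh, hw.2]
          rw [h7]
          nlinarith [mul_nonneg (by linarith : (0:ℝ) ≤ δ1)
              (by linarith : (0:ℝ) ≤ (δ1*(x+ρ)+δ2) - d u q),
            mul_nonneg (by linarith : (0:ℝ) ≤ δ1)
              (by linarith [hf.2.1] : (0:ℝ) ≤ 2*x - d q w)]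
        have hsumDm : x * Dm.card ≤ ∑ v ∈ Dm, dh v := by
          have h := Finset.card_nsmul_le_sum Dm dh x massDm
          rw [nsmul_eq_mul] at h
          linarith [h]
        have hdisjNDm : Disjoint N Dm := by
          rw [Finset.disjoint_left]
          intro v hvN hvDm
          rw [hDm, Finset.mem_filter] at hvDm
          simp only [hNdef, Finset.mem_filter, Finset.mem_univ, true_and] at hvN
          exact hDnotU v hvDm.1 hvN.2.1
        have hdisjLDm : Disjoint L Dm := by
          rw [Finset.disjoint_left]
          intro v hvL hvDm
          rw [hDm, Finset.mem_filter] at hvDm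
          simp only [hLdef, Finset.mem_filter, Finset.mem_univ, true_and] at hvL
          exact hvDm.2 hvL.1
        have hdisj2 : Disjoint (N ∪ L) Dm :=
          Finset.disjoint_union_left.mpr ⟨hdisjNDm, hdisjLDm⟩
        have hsub : ∑ v ∈ (N ∪ L) ∪ Dm, dh v ≤ ∑ v, dh v := hsum_univ _
        rw [Finset.sum_union hdisj2, Finset.sum_union hdisjNL] at hsub
        have hLsplit : ∑ v ∈ L \ Dp, dh v + ∑ v ∈ Dp, dh v = ∑ v ∈ L, dh v :=
          Finset.sum_sdiff hDpL
        have h7 : x * ((L \ Dp).card : ℝ) ≤ ∑ v ∈ L \ Dp, dh v := by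
          have h := Finset.card_nsmul_le_sum (L \ Dp) dh x
            (fun v hv => massL v (Finset.mem_sdiff.mp hv).1)
          rw [nsmul_eq_mul] at h
          linarith [h]
        have h9 : ((L \ Dp).card : ℝ) = L.card - Dp.card := by
          rw [Finset.card_sdiff_of_subset hDpL]
          rw [Nat.cast_sub (Finset.card_le_card hDpL)]
        have hsumLDp : x * L.card + x * Dp.card ≤ ∑ v ∈ L, dh v := by
          rw [← hLsplit]
          nlinarith [h7, hsumDp, h9]
        have e1 : x * (Sh.card : ℝ) ≤ x * D.card :=
          mul_le_mul_of_nonneg_left hShD hx.le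
        have e3 : x * (D.card : ℝ) = x * Dp.card + x * Dm.card := by
          rw [hDsplit]; ring
        have e4 : (0:ℝ) ≤ x * N.card :=
          mul_nonneg hx.le (Nat.cast_nonneg N.card)
        linarith [hsumN, hsumDm, hsumLDp, hsub]
  calc (yC pos C u : ℝ) ≤ (N.card : ℝ) + L.card + Sh.card := hyC
    _ ≤ (1/x) * ∑ v, dh v := by
        rw [show (1/x) * ∑ v, dh v = (∑ v, dh v)/x from by ring, le_div_iff₀ hx]
        linarith [hcore]

end KMZhelp


lemma rr_bounds {δ : ℝ} (h0 : 0 < δ) (h1 : δ ≤ 1/100) :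
    0 < rr (3+δ) δ ∧ rr (3+δ) δ ≤ 1/121 := by
  have e2 : (0:ℝ) ≤ δ*δ := mul_nonneg h0.le h0.le
  have e3 : (0:ℝ) ≤ δ*δ*δ := mul_nonneg e2 h0.le
  have e4 : (0:ℝ) ≤ δ*δ*δ*δ := mul_nonneg e3 h0.le
  have u2 : δ*δ ≤ (1/100)*δ := mul_le_mul_of_nonneg_right h1 h0.le
  have u3 : δ*δ*δ ≤ (1/100)*((1/100)*δ) := by nlinarith
  have u4 : δ*δ*δ*δ ≤ (1/100)*((1/100)*((1/100)*δ)) := by nlinarith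
  have hd : (121:ℝ) ≤ (3+δ)^2 + (3+δ)^3*((3+δ)+1) + (3+δ) + 1 := by nlinarith
  have hdpos : (0:ℝ) < (3+δ)^2 + (3+δ)^3*((3+δ)+1) + (3+δ) + 1 := by nlinarith
  have hn1 : (1 - δ - (3+δ)*δ - (3+δ)^2*δ - (3+δ)^3*δ) ≤ 1 := by nlinarith
  have hnpos : (0:ℝ) < 1 - δ - (3+δ)*δ - (3+δ)^2*δ - (3+δ)^3*δ := by nlinarith
  constructor
  · exact div_pos hnpos hdpos
  · rw [rr, div_le_div_iff₀ hdpos (by norm_num : (0:ℝ) < 121)]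
    nlinarith

theorem rounding_approximate_semimetric' :
    ∃ δ0 : ℝ, 0 < δ0 ∧
      (∀ δ : ℝ, 0 < δ → δ ≤ δ0 →
        ∀ (V : Type) [Fintype V] [DecidableEq V] (pos : V → V → Bool),
          (∀ u v, pos u v = pos v u) → (∀ u, pos u u = true) →
          ∀ d : V → V → ℝ,
            (∀ u v, d u v = d v u) →
            (∀ u, d u u = 0) →
            (∀ u v, 0 ≤ d u v ∧ d u v ≤ 1) →
            (∀ u v w, d u v ≤ (3 + δ) * (d u w + d w v) + δ) →
            ∃ C : V → ℕ, ∀ u : V,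
              (yC pos C u : ℝ) ≤ (1 / rr (3 + δ) δ) *
                ∑ v, (if pos u v then d u v else 1 - d u v)) ∧
      Filter.Tendsto (fun δ : ℝ => rr (3 + δ) δ)
        (nhdsWithin 0 (Set.Ioi 0)) (nhds (1 / 121)) := by
  refine ⟨1/100, by norm_num, ?_, ?_⟩
  · intro δ h0 h1 V _ _ pos hsymP hposd d hsym hd0 hrange htri
    obtain ⟨hxpos, hx121⟩ := rr_bounds h0 h1
    set x : ℝ := rr (3+δ) δ with hxdef
    refine kmz_main pos hposd d hsym hd0 hrange (3+δ) δ x htri (by linarith) h0.le hxpos ?_ ?_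
    · calc (3+δ) * (((3+δ)*(2*x+x)+δ) + ((3+δ)*(2*x+x)+δ)) + δ + 2*x
          ≤ (301/100) * (((301/100)*(2*(1/121)+(1/121))+1/100)
              + ((301/100)*(2*(1/121)+(1/121))+1/100)) + 1/100 + 2*(1/121) := by
            gcongr <;> linarith
        _ ≤ 1 := by norm_num
    · calc (3+δ) * (((3+δ)*(x+((3+δ)*(2*x+x)+δ))+δ) + 2*x) + δ + x
          ≤ (301/100) * (((301/100)*((1/121)+((301/100)*(2*(1/121)+(1/121))+1/100))+1/100)
              + 2*(1/121)) + 1/100 + 1/121 := by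
            gcongr <;> linarith
        _ ≤ 1 := by norm_num
  · have hc : ContinuousAt (fun δ : ℝ => rr (3 + δ) δ) 0 := by
      simp only [rr]
      apply ContinuousAt.div
      · fun_prop
      · fun_prop
      · norm_num
    have h0 : rr (3 + (0:ℝ)) 0 = 1/121 := by norm_num [rr]
    have ht := hc.tendsto
    rw [h0] at ht
    exact ht.mono_left nhdsWithin_le_nhds

/-- rounding any `(δ₁,δ₂)`-semi-metric yields a clustering in which every
vertex has at most `(1/r)·Σ_v d̂_uv` incident disagreements; moreover
`r(δ₁,δ₂) → 1/121` as `δ → 0⁺`. -/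
theorem rounding_approximate_semimetric :
    ∃ δ0 : ℝ, 0 < δ0 ∧
      (∀ δ : ℝ, 0 < δ → δ ≤ δ0 →
        ∀ (V : Type) [Fintype V] [DecidableEq V] (pos : V → V → Bool),
          (∀ u v, pos u v = pos v u) → (∀ u, pos u u = true) →
          ∀ d : V → V → ℝ,
            (∀ u v, d u v = d v u) →
            (∀ u, d u u = 0) →
            (∀ u v, 0 ≤ d u v ∧ d u v ≤ 1) →
            (∀ u v w, d u v ≤ (3 + δ) * (d u w + d w v) + δ) →
            ∃ C : V → ℕ, ∀ u : V,
              (yC pos C u : ℝ) ≤ (1 / rr (3 + δ) δ) *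
                ∑ v, (if pos u v then d u v else 1 - d u v)) ∧
      Filter.Tendsto (fun δ : ℝ => rr (3 + δ) δ)
        (nhdsWithin 0 (Set.Ioi 0)) (nhds (1 / 121)) :=
  rounding_approximate_semimetric'
end

section
/- There exists δ0 > 0 such that for all 0 < δ ≤ δ0 the following holds. Set δ1 = 3 + δ, δ2 = δ, and define r, c1, b by r = (1 − δ2 − δ1δ2 − δ1²δ2 − δ1³δ2) / (δ1² + δ1³(δ1+1) + δ1 + 1), c1 = δ1 + δ2/r, b = (c1+1)δ1 + δ2/r. If d : V × V → [0,1] is symmetric with d_uu = 0 and satisfies the (δ1,δ2)-approximate triangle inequality, and u, v, w ∈ V satisfy d_uw ≤ b·r and d_vw ≤ b·r, then 1 − d_uv − r ≥ 0. -/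
open Finset

/-- analogue of Claim B.3. -/
theorem claim_B3_inequality :
    ∃ δ0 : ℝ, 0 < δ0 ∧
      ∀ δ : ℝ, 0 < δ → δ ≤ δ0 →
        ∀ (V : Type) [Fintype V] (d : V → V → ℝ),
          (∀ u v, d u v = d v u) →
          (∀ u, d u u = 0) →
          (∀ u v, 0 ≤ d u v ∧ d u v ≤ 1) →
          (∀ u v w, d u v ≤ (3 + δ) * (d u w + d w v) + δ) →
          ∀ u v w : V,
            d u w ≤ bconst (3 + δ) δ * rr (3 + δ) δ →
            d v w ≤ bconst (3 + δ) δ * rr (3 + δ) δ →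
            0 ≤ 1 - d u v - rr (3 + δ) δ := by
  refine ⟨1/1000, by norm_num, ?_⟩
  intro δ hδ hδ0 V _ d hsymm hdiag hbnd htri u v w huw hvw
  set N : ℝ := 1 - δ - (3+δ) * δ - (3+δ) ^ 2 * δ - (3+δ) ^ 3 * δ with hNdef
  set D : ℝ := (3+δ) ^ 2 + (3+δ) ^ 3 * ((3+δ) + 1) + (3+δ) + 1 with hDdef
  have hδ1 : δ ≤ 1 := by linarith
  have h2 : δ * δ ≤ δ := by nlinarith
  have h3 : δ * δ * δ ≤ δ := by nlinarith
  have h4 : δ * δ * δ * δ ≤ δ := by nlinarith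
  have h5 : δ * δ * δ * δ * δ ≤ δ := by nlinarith
  have hN : (0:ℝ) < N := by rw [hNdef]; nlinarith
  have hD : (0:ℝ) < D := by rw [hDdef]; nlinarith
  have hr : rr (3+δ) δ = N / D := rfl
  have hrpos : 0 < rr (3+δ) δ := hr ▸ div_pos hN hD
  have hbr : bconst (3+δ) δ * rr (3+δ) δ
      = ((3+δ)+1) * ((3+δ) * N + δ * D) / D := by
    unfold bconst c1const
    rw [hr]
    field_simp
    ring
  have key : (3+δ) * (2 * (bconst (3+δ) δ * rr (3+δ) δ)) + δ + rr (3+δ) δ ≤ 1 := by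
    rw [hbr, hr]
    have e : (3+δ) * (2 * (((3+δ)+1) * ((3+δ) * N + δ * D) / D)) + δ + N / D
        = (2 * (3+δ) * ((3+δ)+1) * ((3+δ) * N + δ * D) + δ * D + N) / D := by
      field_simp
    rw [e, div_le_one hD]
    rw [hNdef, hDdef]
    nlinarith [h2, h3, h4, h5, hδ.le]
  have h1 : d u v ≤ (3+δ) * (d u w + d w v) + δ := htri u v w
  have h6 : d u w + d w v ≤ 2 * (bconst (3+δ) δ * rr (3+δ) δ) := by
    rw [hsymm w v]; linarith
  have h7 : (3+δ) * (d u w + d w v) ≤ (3+δ) * (2 * (bconst (3+δ) δ * rr (3+δ) δ)) :=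
    mul_le_mul_of_nonneg_left h6 (by linarith)
  linarith
end

section
/- There exists δ0 > 0 such that for all 0 < δ ≤ δ0 the following holds. Set δ1 = 3 + δ, δ2 = δ, and define r, c1, b by r = (1 − δ2 − δ1δ2 − δ1²δ2 − δ1³δ2) / (δ1² + δ1³(δ1+1) + δ1 + 1), c1 = δ1 + δ2/r, b = (c1+1)δ1 + δ2/r. If d : V × V → [0,1] is symmetric with d_uu = 0 and satisfies the (δ1,δ2)-approximate triangle inequality, and u, v, w ∈ V satisfy d_uw ≤ c1·r and d_vw > b·r, then d_uv ≥ r. -/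
open Finset

/-! Since `b r = (c₁ + 1) δ₁ r + δ₂` once `r ≠ 0`, the approximate triangle inequality through `u`,
`d_vw ≤ δ₁ (d_vu + d_uw) + δ₂ ≤ δ₁ d_uv + δ₁ c₁ r + δ₂`, leaves `δ₁ r < δ₁ d_uv`. The bound on `δ`
only serves to make `r` positive. -/

theorem lt_of_approx_triangle {V : Type*} {d : V → V → ℝ} {δ1 δ2 c r : ℝ} (hδ1 : 0 < δ1)
    (hsymm : ∀ u v, d u v = d v u) (htri : ∀ u v w, d u v ≤ δ1 * (d u w + d w v) + δ2)
    {u v w : V} (huw : d u w ≤ c * r) (hvw : (c + 1) * δ1 * r + δ2 < d v w) : r < d u v := by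
  have hvw' : (c + 1) * δ1 * r + δ2 < δ1 * (d u v + c * r) + δ2 :=
    calc (c + 1) * δ1 * r + δ2 < d v w := hvw
      _ ≤ δ1 * (d v u + d u w) + δ2 := htri v w u
      _ ≤ δ1 * (d u v + c * r) + δ2 := by rw [hsymm v u]; gcongr
  have : δ1 * r < δ1 * d u v := by linarith
  exact lt_of_mul_lt_mul_left this hδ1.le

theorem rr_pos {δ : ℝ} (hδ : 0 < δ) (hδ0 : δ ≤ 1 / 100) : 0 < rr (3 + δ) δ := by
  unfold rr
  have hδ2 : δ ^ 2 ≤ δ / 100 := by nlinarith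
  have hδ3 : δ ^ 3 ≤ δ / 100 ^ 2 := by nlinarith
  have hδ4 : δ ^ 4 ≤ δ / 100 ^ 3 := by nlinarith
  apply div_pos <;> nlinarith

theorem bconst_mul_rr {δ1 δ2 : ℝ} (hr : rr δ1 δ2 ≠ 0) :
    bconst δ1 δ2 * rr δ1 δ2 = (c1const δ1 δ2 + 1) * δ1 * rr δ1 δ2 + δ2 := by
  rw [bconst, add_mul, div_mul_cancel₀ _ hr]

/-- analogue of Lemma B.4. -/
theorem lemma_B4_inequality :
    ∃ δ0 : ℝ, 0 < δ0 ∧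
      ∀ δ : ℝ, 0 < δ → δ ≤ δ0 →
        ∀ (V : Type) [Fintype V] (d : V → V → ℝ),
          (∀ u v, d u v = d v u) →
          (∀ u, d u u = 0) →
          (∀ u v, 0 ≤ d u v ∧ d u v ≤ 1) →
          (∀ u v w, d u v ≤ (3 + δ) * (d u w + d w v) + δ) →
          ∀ u v w : V,
            d u w ≤ c1const (3 + δ) δ * rr (3 + δ) δ →
            bconst (3 + δ) δ * rr (3 + δ) δ < d v w →
            rr (3 + δ) δ ≤ d u v := by
  refine ⟨1 / 100, by norm_num, fun δ hδ hδ0 V _ d hsymm _ _ htri u v w huw hvw => ?_⟩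
  rw [bconst_mul_rr (rr_pos hδ hδ0).ne'] at hvw
  exact (lt_of_approx_triangle (by linarith) hsymm htri huw hvw).le
end

section
/- There exists δ0 > 0 such that for all 0 < δ ≤ δ0 the following holds. Set δ1 = 3 + δ, δ2 = δ, and define r, c1, b, c2 by r = (1 − δ2 − δ1δ2 − δ1²δ2 − δ1³δ2) / (δ1² + δ1³(δ1+1) + δ1 + 1), c1 = δ1 + δ2/r, b = (c1+1)δ1 + δ2/r, c2 = δ1(b+1) + δ2/r. Let d : V × V → [0,1] be symmetric with d_uu = 0 satisfying the (δ1,δ2)-approximate triangle inequality, and let u, v, w ∈ V with d_vw ≤ r. (i) If c1·r < d_uw ≤ b·r, then d_uv ≥ r − d_vw and 1 − d_uv − r ≥ r − d_vw. (ii) If b·r < d_uw ≤ c2·r, then d_uv − r ≥ r − d_vw and 1 − d_uv − r ≥ r − d_vw. -/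
open Finset

/-- analogue of Claim B.6. -/
theorem claim_B6_inequalities :
    ∃ δ0 : ℝ, 0 < δ0 ∧
      ∀ δ : ℝ, 0 < δ → δ ≤ δ0 →
        ∀ (V : Type) [Fintype V] (d : V → V → ℝ),
          (∀ u v, d u v = d v u) →
          (∀ u, d u u = 0) →
          (∀ u v, 0 ≤ d u v ∧ d u v ≤ 1) →
          (∀ u v w, d u v ≤ (3 + δ) * (d u w + d w v) + δ) →
          ∀ u v w : V, d v w ≤ rr (3 + δ) δ →
            ((c1const (3 + δ) δ * rr (3 + δ) δ < d u w →
                d u w ≤ bconst (3 + δ) δ * rr (3 + δ) δ →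
                rr (3 + δ) δ - d v w ≤ d u v ∧
                rr (3 + δ) δ - d v w ≤ 1 - d u v - rr (3 + δ) δ) ∧
             (bconst (3 + δ) δ * rr (3 + δ) δ < d u w →
                d u w ≤ c2const (3 + δ) δ * rr (3 + δ) δ →
                rr (3 + δ) δ - d v w ≤ d u v - rr (3 + δ) δ ∧
                rr (3 + δ) δ - d v w ≤ 1 - d u v - rr (3 + δ) δ)) := by
  refine ⟨1/1000, by norm_num, ?_⟩
  intro δ hδ hδ0 V _ d hsym hzero hbd htri u v w hvw
  have hδ1pos : (0:ℝ) < 3 + δ := by linarith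
  have hδ1le : (3:ℝ) + δ ≤ 4 := by linarith
  set δ1 : ℝ := 3 + δ with hδ1
  set r : ℝ := rr δ1 δ with hrdef
  have hD : (0:ℝ) < δ1 ^ 2 + δ1 ^ 3 * (δ1 + 1) + δ1 + 1 := by positivity
  have p1 : δ1 * δ ≤ 4 * δ := mul_le_mul_of_nonneg_right hδ1le hδ.le
  have p2 : δ1 ^ 2 ≤ 16 := by nlinarith
  have p3 : δ1 ^ 3 ≤ 64 := by nlinarith
  have p2' : δ1 ^ 2 * δ ≤ 16 * δ := mul_le_mul_of_nonneg_right p2 hδ.le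
  have p3' : δ1 ^ 3 * δ ≤ 64 * δ := mul_le_mul_of_nonneg_right p3 hδ.le
  have hN : (0:ℝ) < 1 - δ - δ1 * δ - δ1 ^ 2 * δ - δ1 ^ 3 * δ := by linarith
  have hr : 0 < r := by
    rw [hrdef]; unfold rr; exact div_pos hN hD
  have hrne : r ≠ 0 := ne_of_gt hr
  have hrD : r * (δ1 ^ 2 + δ1 ^ 3 * (δ1 + 1) + δ1 + 1) =
      1 - δ - δ1 * δ - δ1 ^ 2 * δ - δ1 ^ 3 * δ := by
    rw [hrdef]; unfold rr
    first | (field_simp; ring) | field_simp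
  have hc1r : c1const δ1 δ * r = δ1 * r + δ := by
    unfold c1const; rw [← hrdef]
    first | (field_simp; ring) | field_simp
  have hbr : bconst δ1 δ * r = δ1 ^ 2 * r + δ1 * δ + δ1 * r + δ := by
    unfold bconst c1const; rw [← hrdef]
    first | (field_simp; ring) | field_simp
  have hc2r : c2const δ1 δ * r =
      δ1 ^ 3 * r + δ1 ^ 2 * δ + δ1 ^ 2 * r + δ1 * δ + δ1 * r + δ := by
    unfold c2const bconst c1const; rw [← hrdef]
    first | (field_simp; ring) | field_simp
  have t1 : d u w ≤ δ1 * (d u v + d v w) + δ := htri u w v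
  have t2 : d u v ≤ δ1 * (d u w + d v w) + δ := by
    have := htri u v w; rwa [hsym w v] at this
  have hf0 : 0 ≤ d v w := (hbd v w).1
  have hδ1ge : (1:ℝ) ≤ δ1 := by rw [hδ1]; linarith
  have hfr : (δ1 - 1) * d v w ≤ (δ1 - 1) * r :=
    mul_le_mul_of_nonneg_left hvw (by linarith)
  have q4 : 0 ≤ r * δ1 ^ 4 := by positivity
  have q3 : 0 ≤ δ * δ1 ^ 3 := by positivity
  constructor
  · intro h1 h2
    rw [hc1r] at h1
    rw [hbr] at h2
    have ha : δ1 * d u w ≤ δ1 * (δ1 ^ 2 * r + δ1 * δ + δ1 * r + δ) :=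
      mul_le_mul_of_nonneg_left h2 hδ1pos.le
    constructor
    · have step : δ1 * r < δ1 * (d u v + d v w) := by linarith
      have := (mul_lt_mul_iff_right₀ hδ1pos).mp step
      linarith
    · linarith
  · intro h1 h2
    rw [hbr] at h1
    rw [hc2r] at h2
    have ha : δ1 * d u w ≤
        δ1 * (δ1 ^ 3 * r + δ1 ^ 2 * δ + δ1 ^ 2 * r + δ1 * δ + δ1 * r + δ) :=
      mul_le_mul_of_nonneg_left h2 hδ1pos.le
    constructor
    · have step : δ1 * (δ1 * r + δ + r) < δ1 * (d u v + d v w) := by nlinarith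
      have h3 := (mul_lt_mul_iff_right₀ hδ1pos).mp step
      have : 0 ≤ (δ1 - 1) * r := mul_nonneg (by linarith) hr.le
      linarith
    · linarith
end

section
/- Let u, v ∈ V with |N_u^+ ∩ N_v^+| ≥ |N_u^+|/2. Then the probability that W^{(u,v)} ≤ (1−ε)·|N_u^+ ∩ N_v^+| is at most n^{−ε²C(ε)/8} = n^{−4}, and the probability that W^{(u,v)} ≥ (1+ε)·|N_u^+ ∩ N_v^+| is at most n^{−4}. -/
open Finset

/-!
When `m ≤ |N_u^+|`, `W^{(u,v)}` is `|N_u^+| / m` times the hypergeometric count `|S_u ∩ A|`,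
`A = N_u^+ ∩ N_v^+`. Its moment generating function is dominated by the binomial one: expanding
`(1 + x) ^ |S ∩ A| = ∑_{T ⊆ S ∩ A} x ^ |T|` and using that a uniform `m`-subset of an `N`-set
contains a fixed `t`-set with probability `C(N - t, m - t) / C(N, m) ≤ (m / N) ^ t` gives
`E (1 + x) ^ |S ∩ A| ≤ exp (x m |A| / N)`. Markov's inequality with `x = ε / 2` and
`log (1 + x) ≥ x - x² / 2` bounds both tails; the lower tail is the upper tail of the complementary
count `|S \ A|`. Since `|A| ≥ N / 2`, both exponents are at least `ε² m / 8 ≥ 4 log n`.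
When `m > |N_u^+|` the estimate is exact and both deviation events are empty.
-/

theorem Real.sub_sq_div_two_le_log_one_add {x : ℝ} (hx : 0 ≤ x) :
    x - x ^ 2 / 2 ≤ Real.log (1 + x) := by
  refine le_trans ?_ (Real.le_log_one_add_of_nonneg hx)
  rw [le_div_iff₀ (by positivity)]
  nlinarith [pow_nonneg hx 3]

theorem Nat.descFactorial_mul_pow_le {m N : ℕ} (hmN : m ≤ N) (t : ℕ) :
    m.descFactorial t * N ^ t ≤ N.descFactorial t * m ^ t := by
  induction t with
  | zero => simp
  | succ t ih =>
    have key : (m - t) * N ≤ (N - t) * m := by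
      rw [Nat.sub_mul, Nat.sub_mul, mul_comm N m]
      exact Nat.sub_le_sub_left (Nat.mul_le_mul_left t hmN) _
    calc m.descFactorial (t + 1) * N ^ (t + 1)
        = (m.descFactorial t * N ^ t) * ((m - t) * N) := by
          rw [Nat.descFactorial_succ, pow_succ]; ring
      _ ≤ (N.descFactorial t * m ^ t) * ((N - t) * m) := Nat.mul_le_mul ih key
      _ = N.descFactorial (t + 1) * m ^ (t + 1) := by
          rw [Nat.descFactorial_succ, pow_succ]; ring

theorem Nat.choose_sub_mul_pow_le {t m N : ℕ} (htm : t ≤ m) (hmN : m ≤ N) :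
    (N - t).choose (m - t) * N ^ t ≤ N.choose m * m ^ t := by
  have hpos : 0 < N.choose t * t.factorial :=
    Nat.mul_pos (Nat.choose_pos (htm.trans hmN)) t.factorial_pos
  refine Nat.le_of_mul_le_mul_right ?_ hpos
  calc (N - t).choose (m - t) * N ^ t * (N.choose t * t.factorial)
      = N.choose m * m.choose t * (t.factorial * N ^ t) := by rw [Nat.choose_mul htm]; ring
    _ = N.choose m * (m.descFactorial t * N ^ t) := by
        rw [Nat.descFactorial_eq_factorial_mul_choose]; ring
    _ ≤ N.choose m * (N.descFactorial t * m ^ t) :=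
        Nat.mul_le_mul_left _ (Nat.descFactorial_mul_pow_le hmN t)
    _ = N.choose m * m ^ t * (N.choose t * t.factorial) := by
        rw [Nat.descFactorial_eq_factorial_mul_choose]; ring

namespace Finset

variable {α : Type*}

theorem one_add_pow_card_eq_sum_powerset {R : Type*} [CommSemiring R] (s : Finset α) (x : R) :
    (1 + x) ^ #s = ∑ t ∈ s.powerset, x ^ #t := by
  simpa using prod_one_add (f := fun _ => x) s

variable [DecidableEq α]

theorem card_filter_powersetCard_superset_mul_pow_le (P T : Finset α) (m : ℕ) :
    #{s ∈ P.powersetCard m | T ⊆ s} * #P ^ #T ≤ (#P).choose m * m ^ #T := by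
  rcases eq_empty_or_nonempty {s ∈ P.powersetCard m | T ⊆ s} with hempty | ⟨s, hs⟩
  · simp [hempty]
  obtain ⟨⟨hsP, rfl⟩, hTs⟩ : (s ⊆ P ∧ #s = m) ∧ T ⊆ s := by simpa using hs
  rw [card_filter_powersetCard_subset T P #s (hTs.trans hsP) (card_le_card hTs)]
  exact Nat.choose_sub_mul_pow_le (card_le_card hTs) (card_le_card hsP)

variable {P : Finset α}

theorem sum_powersetCard_one_add_pow_card_inter_le (hP : P.Nonempty) (A : Finset α) (m : ℕ)
    {x : ℝ} (hx : 0 ≤ x) :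
    ∑ s ∈ P.powersetCard m, (1 + x) ^ #(s ∩ A) ≤
      (#P).choose m * Real.exp (x * m * #A / #P) := by
  have hterm : ∀ T ∈ A.powerset, (#{s ∈ P.powersetCard m | T ⊆ s} : ℝ) * x ^ #T ≤
      (#P).choose m * (x * m / #P) ^ #T := by
    intro T _
    have hcount := card_filter_powersetCard_superset_mul_pow_le P T m
    calc (#{s ∈ P.powersetCard m | T ⊆ s} : ℝ) * x ^ #T
        = (#{s ∈ P.powersetCard m | T ⊆ s} * #P ^ #T : ℕ) * x ^ #T / (#P : ℝ) ^ #T := by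
          push_cast; field_simp
      _ ≤ ((#P).choose m * m ^ #T : ℕ) * x ^ #T / (#P : ℝ) ^ #T := by gcongr
      _ = (#P).choose m * (x * m / #P) ^ #T := by push_cast; ring
  calc ∑ s ∈ P.powersetCard m, (1 + x) ^ #(s ∩ A)
      = ∑ s ∈ P.powersetCard m, ∑ T ∈ (s ∩ A).powerset, x ^ #T := by
        simp only [one_add_pow_card_eq_sum_powerset]
    _ = ∑ T ∈ A.powerset, ∑ _s ∈ {s ∈ P.powersetCard m | T ⊆ s}, x ^ #T := by
        refine sum_comm' fun s T => ?_
        simp only [mem_powerset, mem_filter, subset_inter_iff]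
        tauto
    _ = ∑ T ∈ A.powerset, (#{s ∈ P.powersetCard m | T ⊆ s} : ℝ) * x ^ #T := by
        simp only [sum_const, nsmul_eq_mul]
    _ ≤ ∑ T ∈ A.powerset, (#P).choose m * (x * m / #P) ^ #T := sum_le_sum hterm
    _ = (#P).choose m * (1 + x * m / #P) ^ #A := by
        rw [← mul_sum, one_add_pow_card_eq_sum_powerset]
    _ ≤ (#P).choose m * Real.exp (x * m / #P) ^ #A := by
        gcongr
        linarith [Real.add_one_le_exp (x * m / #P)]
    _ = (#P).choose m * Real.exp (x * m * #A / #P) := by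
        rw [← Real.exp_nat_mul]; ring_nf

theorem card_filter_le_card_inter_le (hP : P.Nonempty) (A : Finset α) (m : ℕ) {x : ℝ}
    (hx : 0 ≤ x) (r : ℝ) :
    (#{s ∈ P.powersetCard m | r ≤ #(s ∩ A)} : ℝ) ≤
      (#P).choose m * Real.exp (x * m * #A / #P - r * Real.log (1 + x)) := by
  have hlog : 0 ≤ Real.log (1 + x) := Real.log_nonneg (by linarith)
  have hmarkov : (#{s ∈ P.powersetCard m | r ≤ #(s ∩ A)} : ℝ) * Real.exp (r * Real.log (1 + x))
      ≤ ∑ s ∈ P.powersetCard m, (1 + x) ^ #(s ∩ A) := by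
    calc (#{s ∈ P.powersetCard m | r ≤ #(s ∩ A)} : ℝ) * Real.exp (r * Real.log (1 + x))
        ≤ ∑ s ∈ P.powersetCard m with r ≤ #(s ∩ A), (1 + x) ^ #(s ∩ A) := by
          rw [← nsmul_eq_mul]
          refine card_nsmul_le_sum _ _ _ fun s hs => ?_
          rw [← Real.rpow_natCast, Real.rpow_def_of_pos (by linarith), mul_comm]
          gcongr
          exact (mem_filter.1 hs).2
      _ ≤ ∑ s ∈ P.powersetCard m, (1 + x) ^ #(s ∩ A) :=
          sum_le_sum_of_subset_of_nonneg (filter_subset _ _) fun _ _ _ => by positivity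
  rw [Real.exp_sub, mul_div_assoc', le_div_iff₀ (Real.exp_pos _)]
  exact hmarkov.trans (sum_powersetCard_one_add_pow_card_inter_le hP A m hx)

theorem card_filter_mul_le_card_inter_le (hP : P.Nonempty) (A : Finset α) (m : ℕ) {ε : ℝ}
    (hε0 : 0 ≤ ε) (hε1 : ε ≤ 1) :
    (#{s ∈ P.powersetCard m | (1 + ε) * (m * #A / #P) ≤ #(s ∩ A)} : ℝ) ≤
      (#P).choose m * Real.exp (-(ε ^ 2 * (m * #A / #P) / 4)) := by
  set μ : ℝ := m * #A / #P
  refine (card_filter_le_card_inter_le hP A m (x := ε / 2) (by positivity) _).trans ?_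
  gcongr
  have hL := Real.sub_sq_div_two_le_log_one_add (x := ε / 2) (by positivity)
  have hμ : 0 ≤ μ := by positivity
  calc ε / 2 * m * #A / #P - (1 + ε) * μ * Real.log (1 + ε / 2)
      ≤ ε / 2 * μ - (1 + ε) * μ * (ε / 2 - (ε / 2) ^ 2 / 2) := by
        rw [mul_assoc (ε / 2), mul_div_assoc]; gcongr
    _ ≤ -(ε ^ 2 * μ / 4) := by
        nlinarith [mul_nonneg (mul_nonneg hμ (sq_nonneg ε)) (sub_nonneg.2 hε1)]

theorem card_filter_card_inter_le_mul_le (hP : P.Nonempty) {A : Finset α} (hAP : A ⊆ P)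
    (hA : #P ≤ 2 * #A) (m : ℕ) {ε : ℝ} (hε0 : 0 ≤ ε) (hε1 : ε ≤ 1) :
    (#{s ∈ P.powersetCard m | (#(s ∩ A) : ℝ) ≤ (1 - ε) * (m * #A / #P)} : ℝ) ≤
      (#P).choose m * Real.exp (-(ε ^ 2 * m / 8)) := by
  have hPpos : (0 : ℝ) < #P := by exact_mod_cast hP.card_pos
  have hcompl : (m * #(P \ A) / #P : ℝ) = m - m * #A / #P := by
    rw [card_sdiff_of_subset hAP, Nat.cast_sub (card_le_card hAP)]
    field_simp
  set μ : ℝ := m * #A / #P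
  have hμ : m ≤ 2 * μ := by
    have : (#P : ℝ) ≤ 2 * #A := by exact_mod_cast hA
    rw [mul_div_assoc', le_div_iff₀ hPpos]
    nlinarith [m.cast_nonneg (α := ℝ)]
  have hμm : μ ≤ m := by
    have : (#A : ℝ) ≤ #P := by exact_mod_cast card_le_card hAP
    rw [div_le_iff₀ hPpos]
    nlinarith [m.cast_nonneg (α := ℝ)]
  have hsub : {s ∈ P.powersetCard m | (#(s ∩ A) : ℝ) ≤ (1 - ε) * μ} ⊆
      {s ∈ P.powersetCard m | m - (1 - ε) * μ ≤ #(s ∩ (P \ A))} := by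
    intro s hs
    simp only [mem_filter, mem_powersetCard] at hs ⊢
    obtain ⟨⟨hsP, hsm⟩, hsmall⟩ := hs
    refine ⟨⟨hsP, hsm⟩, ?_⟩
    have hsplit : (#(s ∩ A) : ℝ) + #(s \ A) = m := by
      exact_mod_cast hsm ▸ card_inter_add_card_sdiff s A
    rw [inter_sdiff_left_comm, inter_eq_right.2 (sdiff_subset.trans hsP)]
    linarith
  refine (Nat.cast_le.2 (card_le_card hsub)).trans <|
    (card_filter_le_card_inter_le hP (P \ A) m (x := ε / 2) (by positivity) _).trans ?_
  gcongr
  have hL := Real.sub_sq_div_two_le_log_one_add (x := ε / 2) (by positivity)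
  have hr : 0 ≤ (m : ℝ) - (1 - ε) * μ := by nlinarith
  calc ε / 2 * m * #(P \ A) / #P - (m - (1 - ε) * μ) * Real.log (1 + ε / 2)
      ≤ ε / 2 * (m - μ) - (m - (1 - ε) * μ) * (ε / 2 - (ε / 2) ^ 2 / 2) := by
        rw [mul_assoc (ε / 2), mul_div_assoc, hcompl]; gcongr
    _ ≤ -(ε ^ 2 * m / 8) := by
        have : 0 ≤ 3 * μ - 2 * (m - μ) - ε * μ := by nlinarith
        nlinarith [mul_nonneg (sq_nonneg ε) this]

end Finset

theorem prob_mono {Ω : Type*} [Fintype Ω] {E F : Set Ω} (h : E ⊆ F) : prob E ≤ prob F :=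
  div_le_div_of_nonneg_right (by exact_mod_cast Set.ncard_le_ncard h) (Nat.cast_nonneg _)

theorem prob_empty {Ω : Type*} [Fintype Ω] : prob (∅ : Set Ω) = 0 := by
  simp [prob]

theorem prob_eval_preimage {ι : Type*} [Fintype ι] [DecidableEq ι] {F : ι → Type*}
    [∀ i, Fintype (F i)] [∀ i, Nonempty (F i)] (i : ι) (E : Set (F i)) :
    prob {ω : ∀ j, F j | ω i ∈ E} = prob E := by
  let R := ∀ j : {j // j ≠ i}, F j
  have hevent : {ω : ∀ j, F j | ω i ∈ E}.ncard = E.ncard * Nat.card R :=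
    (Nat.card_congr (((Equiv.piSplitAt i F).subtypeEquiv fun _ => Iff.rfl).trans
      Equiv.prodSubtypeFstEquivSubtypeProd)).trans (Nat.card_prod _ _)
  have hall : Fintype.card (∀ j, F j) = Fintype.card (F i) * Nat.card R := by
    rw [← Nat.card_eq_fintype_card, ← Nat.card_eq_fintype_card,
      Nat.card_congr (Equiv.piSplitAt i F), Nat.card_prod]
  have hR : (Nat.card R : ℝ) ≠ 0 := by
    have : 0 < Nat.card R := Nat.card_pos
    positivity
  rw [prob, prob, hevent, hall]
  push_cast
  exact mul_div_mul_right _ _ hR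

theorem prob_subsetsOfCard {α : Type*} [Fintype α] [DecidableEq α] (P : Finset α) (k : ℕ)
    (p : Finset α → Prop) [DecidablePred p] :
    prob {s : {s : Finset α // s ⊆ P ∧ #s = k} | p s.1} =
      #{s ∈ P.powersetCard k | p s} / (#P).choose k := by
  have hevent : {s : {s : Finset α // s ⊆ P ∧ #s = k} | p s.1}.ncard =
      #{s ∈ P.powersetCard k | p s} := by
    rw [← Set.ncard_image_of_injective _ Subtype.val_injective, ← Set.ncard_coe_finset]
    congr 1
    ext s
    simp only [Set.mem_image, Set.mem_ofPred_eq, Subtype.exists, exists_and_left, exists_prop,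
      exists_eq_right_right, coe_filter, mem_powersetCard]
    tauto
  have hall : Fintype.card {s : Finset α // s ⊆ P ∧ #s = k} = (#P).choose k := by
    rw [Fintype.card_subtype, ← card_powersetCard]
    congr 1
    ext s
    simp [mem_powersetCard]
  rw [prob, hevent, hall]

section Sampling

variable {V : Type*} [Fintype V] [DecidableEq V] (pos : V → V → Bool) {m : ℕ}

theorem prob_sampleSpace_eval (u : V) (p : Finset V → Prop) [DecidablePred p] :
    prob {ω : SampleSpace pos m | p (ω u).1} =
      #{s ∈ (Np pos u).powersetCard (min m #(Np pos u)) | p s} /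
        (#(Np pos u)).choose (min m #(Np pos u)) := by
  have : ∀ w, Nonempty {s : Finset V // s ⊆ Np pos w ∧ #s = min m #(Np pos w)} := fun w =>
    let ⟨s, hs⟩ := exists_subset_card_eq (min_le_right m #(Np pos w))
    ⟨⟨s, hs⟩⟩
  rw [← prob_subsetsOfCard]
  exact prob_eval_preimage
    (F := fun w => {s : Finset V // s ⊆ Np pos w ∧ #s = min m #(Np pos w)}) u {s | p s.1}

theorem West_eq_of_le (ω : SampleSpace pos m) (u v : V) (hm : m ≤ #(Np pos u)) :
    West pos ω u v = #(Np pos u) / m * #((ω u).1 ∩ (Np pos u ∩ Np pos v)) := by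
  rw [West, if_pos hm, ← inter_assoc, inter_eq_left.2 (ω u).2.1]

theorem West_eq_of_lt (ω : SampleSpace pos m) (u v : V) (hm : #(Np pos u) < m) :
    West pos ω u v = #(Np pos u ∩ Np pos v) := by
  rw [West, if_neg hm.not_ge]

variable {pos} {u : V} (v : V) {ε : ℝ}

theorem prob_West_le_mul_le (hN : (Np pos u).Nonempty) (hm : m ≤ #(Np pos u))
    (hX : #(Np pos u) ≤ 2 * #(Np pos u ∩ Np pos v)) (hε0 : 0 ≤ ε) (hε1 : ε ≤ 1) :
    prob {ω : SampleSpace pos m | West pos ω u v ≤ (1 - ε) * #(Np pos u ∩ Np pos v)} ≤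
      Real.exp (-(ε ^ 2 * m / 8)) := by
  let P := Np pos u
  let A := P ∩ Np pos v
  calc prob {ω : SampleSpace pos m | West pos ω u v ≤ (1 - ε) * #A}
      ≤ prob {ω : SampleSpace pos m | (#((ω u).1 ∩ A) : ℝ) ≤ (1 - ε) * (m * #A / #P)} := by
        refine prob_mono fun ω hω => ?_
        have hk : #((ω u).1 ∩ A) ≤ m :=
          (card_le_card inter_subset_left).trans_eq ((ω u).2.2.trans (min_eq_left hm))
        rcases Nat.eq_zero_or_pos m with rfl | hmpos
        · rw [Set.mem_ofPred_eq, Nat.le_zero.1 hk]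
          simp
        have hscale : (1 - ε) * #A = #P / m * ((1 - ε) * (m * #A / #P)) := by field_simp
        rw [Set.mem_ofPred_eq, West_eq_of_le pos ω u v hm, hscale] at hω
        exact le_of_mul_le_mul_left hω (by positivity)
    _ = #{s ∈ P.powersetCard m | (#(s ∩ A) : ℝ) ≤ (1 - ε) * (m * #A / #P)} / (#P).choose m :=
        (prob_sampleSpace_eval pos u fun s => (#(s ∩ A) : ℝ) ≤ (1 - ε) * (m * #A / #P)).trans
          (by rw [min_eq_left hm])
    _ ≤ Real.exp (-(ε ^ 2 * m / 8)) := by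
        have hC : (0 : ℝ) < (#P).choose m := by exact_mod_cast Nat.choose_pos hm
        exact (div_le_iff₀ hC).2 <|
          (card_filter_card_inter_le_mul_le hN inter_subset_left hX m hε0 hε1).trans_eq
            (mul_comm _ _)

theorem prob_mul_le_West_le (hN : (Np pos u).Nonempty) (hm : m ≤ #(Np pos u))
    (hX : #(Np pos u) ≤ 2 * #(Np pos u ∩ Np pos v)) (hε0 : 0 ≤ ε) (hε1 : ε ≤ 1) :
    prob {ω : SampleSpace pos m | (1 + ε) * #(Np pos u ∩ Np pos v) ≤ West pos ω u v} ≤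
      Real.exp (-(ε ^ 2 * m / 8)) := by
  let P := Np pos u
  let A := P ∩ Np pos v
  have hNpos : (0 : ℝ) < #P := by exact_mod_cast hN.card_pos
  have hPA : (#P : ℝ) ≤ 2 * #A := by exact_mod_cast hX
  have hXpos : (0 : ℝ) < #A := by linarith
  calc prob {ω : SampleSpace pos m | (1 + ε) * #A ≤ West pos ω u v}
      ≤ prob {ω : SampleSpace pos m | (1 + ε) * (m * #A / #P) ≤ (#((ω u).1 ∩ A) : ℝ)} := by
        refine prob_mono fun ω hω => ?_
        rcases Nat.eq_zero_or_pos m with rfl | hmpos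
        · rw [Set.mem_ofPred_eq, West_eq_of_le pos ω u v hm, Nat.cast_zero, div_zero,
            zero_mul] at hω
          nlinarith
        have hscale : (1 + ε) * #A = #P / m * ((1 + ε) * (m * #A / #P)) := by field_simp
        rw [Set.mem_ofPred_eq, West_eq_of_le pos ω u v hm, hscale] at hω
        exact le_of_mul_le_mul_left hω (by positivity)
    _ = #{s ∈ P.powersetCard m | (1 + ε) * (m * #A / #P) ≤ (#(s ∩ A) : ℝ)} / (#P).choose m :=
        (prob_sampleSpace_eval pos u fun s => (1 + ε) * (m * #A / #P) ≤ (#(s ∩ A) : ℝ)).trans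
          (by rw [min_eq_left hm])
    _ ≤ Real.exp (-(ε ^ 2 * (m * #A / #P) / 4)) := by
        have hC : (0 : ℝ) < (#P).choose m := by exact_mod_cast Nat.choose_pos hm
        exact (div_le_iff₀ hC).2 <|
          (card_filter_mul_le_card_inter_le hN A m hε0 hε1).trans_eq (mul_comm _ _)
    _ ≤ Real.exp (-(ε ^ 2 * m / 8)) := by
        have hμ : (m : ℝ) / 2 ≤ m * #A / #P := by
          rw [div_le_div_iff₀ two_pos hNpos]
          nlinarith [m.cast_nonneg (α := ℝ)]
        exact Real.exp_le_exp.2 (by nlinarith [mul_le_mul_of_nonneg_left hμ (sq_nonneg ε)])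

end Sampling

theorem exp_neg_mul_mSample_le (V : Type*) [Fintype V] [Nonempty V] {ε : ℝ} (hε : 0 < ε) :
    Real.exp (-(ε ^ 2 * mSample V ε / 8)) ≤ 1 / (Fintype.card V : ℝ) ^ 4 := by
  have hm : 32 / ε ^ 2 * Real.log (Fintype.card V) ≤ mSample V ε := Nat.le_ceil _
  calc Real.exp (-(ε ^ 2 * mSample V ε / 8))
      ≤ Real.exp (-Real.log ((Fintype.card V : ℝ) ^ 4)) := by
        rw [Real.log_pow, Real.exp_le_exp, neg_le_neg_iff]
        rw [div_mul_eq_mul_div, div_le_iff₀ (by positivity)] at hm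
        push_cast
        nlinarith
    _ = 1 / (Fintype.card V : ℝ) ^ 4 := by
        rw [Real.exp_neg, Real.exp_log (by positivity), one_div]

theorem West_concentration_general
    {V : Type*} [Fintype V] [DecidableEq V] (pos : V → V → Bool)
    (hrefl : ∀ u, pos u u = true)
    (ε : ℝ) (hε0 : 0 < ε) (hε1 : ε < 1) (u v : V)
    (h : ((Np pos u).card : ℝ) / 2 ≤ ((Np pos u ∩ Np pos v).card : ℝ)) :
    prob {ω : SampleSpace pos (mSample V ε) |
        West pos ω u v ≤ (1 - ε) * ((Np pos u ∩ Np pos v).card : ℝ)} ≤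
      1 / (Fintype.card V : ℝ) ^ 4 ∧
    prob {ω : SampleSpace pos (mSample V ε) |
        (1 + ε) * ((Np pos u ∩ Np pos v).card : ℝ) ≤ West pos ω u v} ≤
      1 / (Fintype.card V : ℝ) ^ 4 := by
  have hN : (Np pos u).Nonempty := ⟨u, by simp [Np, hrefl]⟩
  have : Nonempty V := ⟨u⟩
  have hbound := exp_neg_mul_mSample_le V hε0
  rcases le_or_gt (mSample V ε) #(Np pos u) with hm | hm
  · have hX : #(Np pos u) ≤ 2 * #(Np pos u ∩ Np pos v) := by
      have : (#(Np pos u) : ℝ) ≤ 2 * #(Np pos u ∩ Np pos v) := by linarith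
      exact_mod_cast this
    exact ⟨(prob_West_le_mul_le v hN hm hX hε0.le hε1.le).trans hbound,
      (prob_mul_le_West_le v hN hm hX hε0.le hε1.le).trans hbound⟩
  have hX : (0 : ℝ) < #(Np pos u ∩ Np pos v) := by
    have : (0 : ℝ) < #(Np pos u) := by exact_mod_cast hN.card_pos
    linarith
  have hpos : (0 : ℝ) ≤ 1 / (Fintype.card V : ℝ) ^ 4 := by positivity
  refine ⟨(prob_mono fun ω hω => ?_).trans (prob_empty.trans_le hpos),
    (prob_mono fun ω hω => ?_).trans (prob_empty.trans_le hpos)⟩ <;>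
  · rw [Set.mem_ofPred_eq, West_eq_of_lt pos ω u v hm] at hω
    nlinarith

/-- concentration of `W^{(u,v)}`. -/
theorem West_concentration
    {V : Type*} [Fintype V] [DecidableEq V] (pos : V → V → Bool)
    (hsymm : ∀ u v, pos u v = pos v u) (hrefl : ∀ u, pos u u = true)
    (ε : ℝ) (hε0 : 0 < ε) (hε1 : ε < 1) (u v : V)
    (h : ((Np pos u).card : ℝ) / 2 ≤ ((Np pos u ∩ Np pos v).card : ℝ)) :
    prob {ω : SampleSpace pos (mSample V ε) |
        West pos ω u v ≤ (1 - ε) * ((Np pos u ∩ Np pos v).card : ℝ)} ≤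
      1 / (Fintype.card V : ℝ) ^ 4 ∧
    prob {ω : SampleSpace pos (mSample V ε) |
        (1 + ε) * ((Np pos u ∩ Np pos v).card : ℝ) ≤ West pos ω u v} ≤
      1 / (Fintype.card V : ℝ) ^ 4 :=
  West_concentration_general pos hrefl ε hε0 hε1 u v h
end
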